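/- arXiv:2412.20861 — 13 statements merged into one kernel-verified Lean document; each statement's English description precedes it below -/
import Mathlib

section
/- For any simplicial complex K ≠ 2^[m] on [m] with m ≥ 2, the chromatic number of Bier(K) satisfies max(m−1, χ(K), χ(K^∨)) ≤ χ(Bier(K)) ≤ m. -/
open Finset

/-- A (finite abstract) simplicial complex on the vertex type `α`:
a set of finite subsets containing `∅` and closed under taking subsets. -/
def IsSimplicialComplex {α : Type*} (K : Set (Finset α)) : Prop :=
  ∅ ∈ K ∧ ∀ σ ∈ K, ∀ τ ⊆ σ, τ ∈ K

/-- The Alexander dual of `K` on `[m]`: `J ∈ K^∨` iff `[m] \ J ∉ K`. -/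
def dualK {m : ℕ} (K : Set (Finset (Fin m))) : Set (Finset (Fin m)) :=
  {J | Finset.univ \ J ∉ K}

/-- The Bier sphere of `K`: the deleted join of `K` and its Alexander dual,
on the vertex set `[m] ⊔ [m']` (encoded as `Fin m ⊕ Fin m`, `inl` = unprimed,
`inr` = primed). -/
def bier {m : ℕ} (K : Set (Finset (Fin m))) : Set (Finset (Fin m ⊕ Fin m)) :=
  {S | ∃ I J : Finset (Fin m), I ∈ K ∧ J ∈ dualK K ∧ Disjoint I J ∧
    S = I.map Function.Embedding.inl ∪ J.map Function.Embedding.inr}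

/-- The chromatic number of (the 1-skeleton of) a simplicial complex `L`:
the least `n` such that the (geometric) vertices can be colored with `n` colors
so that the endpoints of every edge of `L` get different colors. -/
noncomputable def chrom {α : Type*} [DecidableEq α] (L : Set (Finset α)) : ℕ :=
  sInf {n : ℕ | ∃ c : α → ℕ, (∀ i : α, ({i} : Finset α) ∈ L → c i < n) ∧
    ∀ i j : α, i ≠ j → ({i, j} : Finset α) ∈ L → c i ≠ c j}

lemma dual_mono {m : ℕ} {K : Set (Finset (Fin m))} (hK : IsSimplicialComplex K)
    {J' J : Finset (Fin m)} (h : J' ⊆ J) (hJ : J ∈ dualK K) : J' ∈ dualK K := by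
  intro hc
  exact hJ (hK.2 _ hc _ (sdiff_subset_sdiff (le_refl _) h))

lemma bier_down {m : ℕ} {K : Set (Finset (Fin m))} (hK : IsSimplicialComplex K)
    {S T : Finset (Fin m ⊕ Fin m)} (hS : S ∈ bier K) (hT : T ⊆ S) : T ∈ bier K := by
  classical
  obtain ⟨I, J, hI, hJ, hd, rfl⟩ := hS
  refine ⟨I.filter (fun i => Sum.inl i ∈ T), J.filter (fun j => Sum.inr j ∈ T),
    hK.2 _ hI _ (filter_subset _ _), dual_mono hK (filter_subset _ _) hJ,
    hd.mono (filter_subset _ _) (filter_subset _ _), ?_⟩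
  ext x
  cases x with
  | inl a =>
    simp only [mem_union, mem_map, Function.Embedding.inl_apply, mem_filter]
    constructor
    · intro hx
      have := hT hx
      simp at this
      exact Or.inl ⟨a, ⟨this, hx⟩, rfl⟩
    · rintro (⟨b, ⟨_, hb⟩, heq⟩ | ⟨b, _, heq⟩)
      · cases heq; exact hb
      · exact absurd heq (by simp)
  | inr a =>
    simp only [mem_union, mem_map, Function.Embedding.inr_apply, mem_filter]
    constructor
    · intro hx
      have := hT hx
      simp at this
      exact Or.inr ⟨a, ⟨this, hx⟩, rfl⟩
    · rintro (⟨b, _, heq⟩ | ⟨b, ⟨_, hb⟩, heq⟩)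
      · exact absurd heq (by simp)
      · cases heq; exact hb

/-- `max (m-1, χ(K), χ(K^∨)) ≤ χ(Bier(K)) ≤ m`. -/
theorem chrom_bier_bounds {m : ℕ} (hm : 2 ≤ m) (K : Set (Finset (Fin m)))
    (hK : IsSimplicialComplex K) (hKne : Finset.univ ∉ K) :
    max (m - 1) (max (chrom K) (chrom (dualK K))) ≤ chrom (bier K) ∧
      chrom (bier K) ≤ m := by
  classical
  have hempty_dual : (∅ : Finset (Fin m)) ∈ dualK K := by simpa [dualK] using hKne
  -- the upper bound: the coloring (i, i') ↦ i
  have hm_mem : m ∈ {n : ℕ | ∃ c : Fin m ⊕ Fin m → ℕ,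
      (∀ i, ({i} : Finset (Fin m ⊕ Fin m)) ∈ bier K → c i < n) ∧
      ∀ i j, i ≠ j → ({i, j} : Finset (Fin m ⊕ Fin m)) ∈ bier K → c i ≠ c j} := by
    refine ⟨Sum.elim (fun i => (i : ℕ)) (fun i => (i : ℕ)), fun i _ => ?_, ?_⟩
    · cases i <;> simpa using Fin.is_lt _
    · rintro x y hne ⟨I, J, hI, hJ, hd, heq⟩
      have hx : x ∈ I.map Function.Embedding.inl ∪ J.map Function.Embedding.inr := by
        rw [← heq]; simp
      have hy : y ∈ I.map Function.Embedding.inl ∪ J.map Function.Embedding.inr := by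
        rw [← heq]; simp
      cases x with
      | inl a =>
        cases y with
        | inl b =>
          simp only [Sum.elim_inl, ne_eq, Fin.val_inj]
          exact fun h => hne (by rw [h])
        | inr b =>
          simp only [mem_union, mem_map] at hx hy
          have ha : a ∈ I := by simpa using hx
          have hb : b ∈ J := by simpa using hy
          have : a ≠ b := fun h => (Finset.disjoint_left.mp hd ha) (h ▸ hb)
          simpa [Fin.val_inj] using this
      | inr a =>
        cases y with
        | inl b =>
          have ha : a ∈ J := by simpa using hx
          have hb : b ∈ I := by simpa using hy
          have : b ≠ a := fun h => (Finset.disjoint_left.mp hd hb) (h ▸ ha)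
          simpa [Fin.val_inj, eq_comm] using fun h => this h.symm
        | inr b =>
          simp only [Sum.elim_inr, ne_eq, Fin.val_inj]
          exact fun h => hne (by rw [h])
  have hub : chrom (bier K) ≤ m := Nat.sInf_le hm_mem
  -- extract an optimal coloring of the Bier sphere
  have hne' : {n : ℕ | ∃ c : Fin m ⊕ Fin m → ℕ,
      (∀ i, ({i} : Finset (Fin m ⊕ Fin m)) ∈ bier K → c i < n) ∧
      ∀ i j, i ≠ j → ({i, j} : Finset (Fin m ⊕ Fin m)) ∈ bier K → c i ≠ c j}.Nonempty :=
    ⟨m, hm_mem⟩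
  obtain ⟨c, hc1, hc2⟩ := Nat.sInf_mem hne'
  set n := chrom (bier K) with hn
  -- K lower bound
  have hlbK : chrom K ≤ n := by
    apply Nat.sInf_le
    refine ⟨fun i => c (Sum.inl i), fun i hi => ?_, fun i j hij hijK => ?_⟩
    · exact hc1 _ ⟨{i}, ∅, hi, hempty_dual, by simp, by simp⟩
    · refine hc2 _ _ (by simp [hij]) ⟨{i, j}, ∅, hijK, hempty_dual, by simp, ?_⟩
      simp [Finset.map_insert]
  have hlbD : chrom (dualK K) ≤ n := by
    apply Nat.sInf_le
    refine ⟨fun i => c (Sum.inr i), fun i hi => ?_, fun i j hij hijK => ?_⟩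
    · exact hc1 _ ⟨∅, {i}, hK.1, hi, by simp, by simp⟩
    · refine hc2 _ _ (by simp [hij]) ⟨∅, {i, j}, hK.1, hijK, by simp, ?_⟩
      simp [Finset.map_insert]
  -- clique lower bound m - 1
  have hlbm : m - 1 ≤ n := by
    obtain ⟨I, hIK, hImax⟩ : ∃ I ∈ K, ∀ J ∈ K, J.card ≤ I.card := by
      have h1 : ((univ : Finset (Finset (Fin m))).filter (· ∈ K)).Nonempty :=
        ⟨∅, by simp [hK.1]⟩
      obtain ⟨I, hI, hmax⟩ := Finset.exists_max_image _ Finset.card h1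
      exact ⟨I, (mem_filter.mp hI).2, fun J hJ => hmax J (by simp [hJ])⟩
    have hIne : I ≠ univ := fun h => hKne (h ▸ hIK)
    obtain ⟨a, ha⟩ : ∃ a, a ∉ I := by
      by_contra h
      push_neg at h
      exact hIne (eq_univ_iff_forall.mpr h)
    set J : Finset (Fin m) := (univ \ I).erase a with hJdef
    have hJdual : J ∈ dualK K := by
      have huj : univ \ J = insert a I := by
        ext x
        simp only [hJdef, mem_sdiff, mem_erase, mem_univ, true_and, mem_insert]
        tauto
      intro hc
      rw [huj] at hc
      have := hImax _ hc
      rw [card_insert_of_notMem ha] at this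
      omega
    have hdisj : Disjoint I J := by
      rw [Finset.disjoint_left]
      intro x hx
      simp [hJdef, hx]
    have hSb : I.map Function.Embedding.inl ∪ J.map Function.Embedding.inr ∈ bier K :=
      ⟨I, J, hIK, hJdual, hdisj, rfl⟩
    set S := I.map Function.Embedding.inl ∪ J.map Function.Embedding.inr with hSdef
    have hcardI : I.card < m := by
      have h1 : I.card ≤ m := by simpa using card_le_card (subset_univ I)
      rcases lt_or_eq_of_le h1 with h | h
      · exact h
      · exact absurd (eq_univ_of_card I (by simpa using h)) hIne
    have hcardJ : J.card = m - I.card - 1 := by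
      rw [hJdef, card_erase_of_mem (by simp [ha]), card_sdiff_of_subset (subset_univ I)]
      simp
    have hcardS : S.card = m - 1 := by
      rw [hSdef, card_union_of_disjoint, card_map, card_map, hcardJ]
      · omega
      · rw [Finset.disjoint_left]
        rintro x hx hx'
        simp only [mem_map] at hx hx'
        obtain ⟨u, _, rfl⟩ := hx
        obtain ⟨v, _, hv⟩ := hx'
        exact absurd hv (by simp)
    have hinj : Set.InjOn c S := by
      intro v hv w hw hvw
      by_contra hne
      exact hc2 v w hne (bier_down hK hSb (by
        intro x hx
        simp only [mem_insert, mem_singleton] at hx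
        rcases hx with rfl | rfl
        · exact hv
        · exact hw)) hvw
    have hmaps : ∀ v ∈ S, c v ∈ Finset.range n := by
      intro v hv
      rw [Finset.mem_range]
      exact hc1 v (bier_down hK hSb (by simpa using hv))
    have := Finset.card_le_card_of_injOn c hmaps hinj
    rw [hcardS, Finset.card_range] at this
    exact this
  exact ⟨max_le hlbm (max_le hlbK hlbD), hub⟩
end

section
/- Let K ≠ 2^[m] be a simplicial complex on [m] and i ∈ [m]. Then Bier(K) is a weak suspension with vertex pair {i, i'} if and only if K is a weak cone with apex i and K^∨ is a weak cone with apex i'. -/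
open Finset

/-- `L` is a weak suspension with vertex pair `{a,b}`: `a ≠ b` are vertices,
`{a,b}` is not an edge, and every other vertex is adjacent to both `a` and `b`. -/
def IsWeakSuspensionPair {β : Type*} [DecidableEq β] (L : Set (Finset β)) (a b : β) : Prop :=
  a ≠ b ∧ ({a} : Finset β) ∈ L ∧ ({b} : Finset β) ∈ L ∧ ({a, b} : Finset β) ∉ L ∧
    ∀ v : β, ({v} : Finset β) ∈ L → v ≠ a → v ≠ b →
      ({a, v} : Finset β) ∈ L ∧ ({b, v} : Finset β) ∈ L

/-- `L` is a weak cone with apex `a`: `a` is a vertex adjacent in the 1-skeleton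
to every other vertex. -/
def IsWeakConeApex {β : Type*} [DecidableEq β] (L : Set (Finset β)) (a : β) : Prop :=
  ({a} : Finset β) ∈ L ∧
    ∀ v : β, ({v} : Finset β) ∈ L → v ≠ a → ({a, v} : Finset β) ∈ L

lemma bier_mem_inl {m : ℕ} {I J : Finset (Fin m)} {x : Fin m} :
    Sum.inl x ∈ I.map Function.Embedding.inl ∪ J.map Function.Embedding.inr ↔ x ∈ I := by
  simp

lemma bier_mem_inr {m : ℕ} {I J : Finset (Fin m)} {x : Fin m} :
    Sum.inr x ∈ I.map Function.Embedding.inl ∪ J.map Function.Embedding.inr ↔ x ∈ J := by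
  simp

lemma bier_decomp {m : ℕ} {K : Set (Finset (Fin m))} {S : Finset (Fin m ⊕ Fin m)}
    (hS : S ∈ bier K) :
    ∃ I J : Finset (Fin m), I ∈ K ∧ J ∈ dualK K ∧ Disjoint I J ∧
      (∀ x, Sum.inl x ∈ S ↔ x ∈ I) ∧ (∀ x, Sum.inr x ∈ S ↔ x ∈ J) := by
  obtain ⟨I, J, hI, hJ, hd, rfl⟩ := hS
  exact ⟨I, J, hI, hJ, hd, fun x => bier_mem_inl, fun x => bier_mem_inr⟩

/-- `Bier(K)` is a weak suspension with vertex pair `{i,i'}` iff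
`K` is a weak cone with apex `i` and `K^∨` is a weak cone with apex `i'`. -/
theorem bier_weak_suspension_iff {m : ℕ} (hm : 2 ≤ m) (K : Set (Finset (Fin m)))
    (hK : IsSimplicialComplex K) (hKne : Finset.univ ∉ K) (i : Fin m) :
    IsWeakSuspensionPair (bier K) (Sum.inl i) (Sum.inr i) ↔
      IsWeakConeApex K i ∧ IsWeakConeApex (dualK K) i := by
  have hed : (∅ : Finset (Fin m)) ∈ dualK K := by simpa [dualK] using hKne
  constructor
  · rintro ⟨hne, hai, hbi, hab, hadj⟩
    have hiK : ({i} : Finset (Fin m)) ∈ K := by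
      obtain ⟨I, J, hI, -, -, hl, -⟩ := bier_decomp hai
      have : I = {i} := by ext x; rw [← hl]; simp
      exact this ▸ hI
    have hiD : ({i} : Finset (Fin m)) ∈ dualK K := by
      obtain ⟨I, J, -, hJ, -, -, hr⟩ := bier_decomp hbi
      have : J = {i} := by ext x; rw [← hr]; simp
      exact this ▸ hJ
    refine ⟨⟨hiK, fun w hw hwi => ?_⟩, ⟨hiD, fun w hw hwi => ?_⟩⟩
    · have hv : ({Sum.inl w} : Finset (Fin m ⊕ Fin m)) ∈ bier K :=
        ⟨{w}, ∅, hw, hed, by simp, by simp⟩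
      have := (hadj (Sum.inl w) hv (by simp [hwi]) (by simp)).1
      obtain ⟨I, J, hI, -, -, hl, -⟩ := bier_decomp this
      have : I = {i, w} := by ext x; rw [← hl]; simp
      exact this ▸ hI
    · have hv : ({Sum.inr w} : Finset (Fin m ⊕ Fin m)) ∈ bier K :=
        ⟨∅, {w}, hK.1, hw, by simp, by simp⟩
      have := (hadj (Sum.inr w) hv (by simp) (by simp [hwi])).2
      obtain ⟨I, J, -, hJ, -, -, hr⟩ := bier_decomp this
      have : J = {i, w} := by ext x; rw [← hr]; simp
      exact this ▸ hJ
  · rintro ⟨⟨hiK, hconeK⟩, ⟨hiD, hconeD⟩⟩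
    refine ⟨by simp, ⟨{i}, ∅, hiK, hed, by simp, by simp⟩,
      ⟨∅, {i}, hK.1, hiD, by simp, by simp⟩, ?_, ?_⟩
    · intro h
      obtain ⟨I, J, -, -, hd, hl, hr⟩ := bier_decomp h
      exact Finset.disjoint_left.1 hd ((hl i).1 (by simp)) ((hr i).1 (by simp))
    · rintro (w | w) hv hva hvb
      · have hwi : w ≠ i := fun h => hva (by rw [h])
        obtain ⟨I, J, hI, -, -, hl, -⟩ := bier_decomp hv
        have hIw : I = {w} := by ext x; rw [← hl]; simp
        have hwK : ({w} : Finset (Fin m)) ∈ K := hIw ▸ hI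
        constructor
        · exact ⟨{i, w}, ∅, hconeK w hwK hwi, hed, by simp,
            by ext x; cases x <;> simp⟩
        · exact ⟨{w}, {i}, hwK, hiD, by simpa using hwi,
            by ext x; cases x <;> simp [or_comm]⟩
      · have hwi : w ≠ i := fun h => hvb (by rw [h])
        obtain ⟨I, J, -, hJ, -, -, hr⟩ := bier_decomp hv
        have hJw : J = {w} := by ext x; rw [← hr]; simp
        have hwD : ({w} : Finset (Fin m)) ∈ dualK K := hJw ▸ hJ
        constructor
        · exact ⟨{i}, {w}, hiK, hwD, by simpa using (hwi ∘ Eq.symm),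
            by ext x; cases x <;> simp⟩
        · exact ⟨∅, {i, w}, hK.1, hconeD w hwD hwi, by simp,
            by ext x; cases x <;> simp⟩
end

section
/- Let K ≠ 2^[m] be a simplicial complex on [m] and i ∈ [m]. The following are equivalent: (a) K is a cone with apex i (every facet of K contains i); (b) K^∨ is a cone with apex i'; (c) Bier(K) is the simplicial suspension over Bier(del_K(i)) with vertex pair {i, i'}. -/
open Finset

/-- The Alexander dual of `K` with respect to the ground set `V`. -/
def dualOn {α : Type*} [DecidableEq α] (V : Finset α) (K : Set (Finset α)) :
    Set (Finset α) :=
  {J | J ⊆ V ∧ V \ J ∉ K}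

/-- The Bier sphere of a complex `K` with ground set `V`: the deleted join of
`K` and its Alexander dual (`inl` = unprimed vertices, `inr` = primed ones). -/
def bierOn {α : Type*} [DecidableEq α] (V : Finset α) (K : Set (Finset α)) :
    Set (Finset (α ⊕ α)) :=
  {S | ∃ I J : Finset α, I ∈ K ∧ J ∈ dualOn V K ∧ Disjoint I J ∧
    S = I.map Function.Embedding.inl ∪ J.map Function.Embedding.inr}

section Aux

lemma decomp_eq {α : Type*} [DecidableEq α] {I J I' J' : Finset α}
    (h : I.map Function.Embedding.inl ∪ J.map Function.Embedding.inr
       = I'.map Function.Embedding.inl ∪ J'.map Function.Embedding.inr) :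
    I = I' ∧ J = J' := by
  constructor <;> ext a
  · have := congrArg (fun s => Sum.inl a ∈ s) h
    simpa using this
  · have := congrArg (fun s => Sum.inr a ∈ s) h
    simpa using this

variable {m : ℕ} {K : Set (Finset (Fin m))} {i : Fin m}

lemma lemB (hK : IsSimplicialComplex K) (hc : ∀ σ ∈ K, insert i σ ∈ K) (τ : Finset (Fin m)) :
    τ.erase i ∈ K ↔ τ ∈ K := by
  constructor
  · intro h
    exact hK.2 _ (hc _ h) τ (by intro x hx; by_cases hxi : x = i <;> simp [hxi, Finset.mem_insert, hx])
  · intro h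
    exact hK.2 _ h _ (Finset.erase_subset _ _)

lemma dualV' (J : Finset (Fin m)) :
    J ∈ dualOn (Finset.univ.erase i) {σ ∈ K | i ∉ σ} ↔
      i ∉ J ∧ (Finset.univ \ J).erase i ∉ K := by
  have h1 : J ⊆ Finset.univ.erase i ↔ i ∉ J := by
    rw [Finset.subset_erase]
    simp
  have h2 : (Finset.univ.erase i) \ J = (Finset.univ \ J).erase i := by
    ext x; simp [Finset.mem_erase, and_comm, and_left_comm]
  have h3 : (Finset.univ \ J).erase i ∈ {σ ∈ K | i ∉ σ} ↔ (Finset.univ \ J).erase i ∈ K := by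
    simp [Set.mem_setOf_eq, Finset.notMem_erase]
  constructor
  · rintro ⟨ha, hb⟩
    rw [h2] at hb
    exact ⟨h1.1 ha, fun h => hb (h3.2 h)⟩
  · rintro ⟨ha, hb⟩
    exact ⟨h1.2 ha, by rw [h2]; exact fun h => hb (h3.1 h)⟩

lemma part2 (hK : IsSimplicialComplex K) (hKne : Finset.univ ∉ K) :
    (∀ σ ∈ K, insert i σ ∈ K) ↔
      bierOn Finset.univ K =
        {S | ∃ τ s : Finset (Fin m ⊕ Fin m),
          (τ = ∅ ∨ τ = {Sum.inl i} ∨ τ = {Sum.inr i}) ∧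
          s ∈ bierOn (Finset.univ.erase i) {σ ∈ K | i ∉ σ} ∧ S = τ ∪ s} := by
  constructor
  · intro hc
    ext S
    simp only [bierOn, Set.mem_setOf_eq]
    constructor
    · rintro ⟨I, J, hI, hJ, hd, rfl⟩
      by_cases hiI : i ∈ I
      · have hiJ : i ∉ J := fun h => (Finset.disjoint_left.1 hd hiI) h
        refine ⟨{Sum.inl i}, (I.erase i).map Function.Embedding.inl ∪ J.map Function.Embedding.inr,
          Or.inr (Or.inl rfl),
          ⟨I.erase i, J, ⟨hK.2 _ hI _ (Finset.erase_subset _ _), Finset.notMem_erase _ _⟩,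
            (dualV' J).2 ⟨hiJ, by rw [lemB hK hc]; exact hJ.2⟩,
            Finset.disjoint_of_subset_left (Finset.erase_subset _ _) hd, rfl⟩, ?_⟩
        ext x
        rcases x with a | a <;>
          by_cases hai : a = i <;>
            simp [hai, hiI, hiJ, Finset.mem_erase, Finset.mem_insert]
      · by_cases hiJ : i ∈ J
        · refine ⟨{Sum.inr i}, I.map Function.Embedding.inl ∪ (J.erase i).map Function.Embedding.inr,
            Or.inr (Or.inr rfl),
            ⟨I, J.erase i, ⟨hI, hiI⟩,
              (dualV' _).2 ⟨Finset.notMem_erase _ _, ?_⟩,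
              Finset.disjoint_of_subset_right (Finset.erase_subset _ _) hd, rfl⟩, ?_⟩
          · have he : (Finset.univ \ J.erase i).erase i = Finset.univ \ J := by
              ext x
              by_cases hxi : x = i <;> simp [hxi, hiJ, Finset.mem_erase]
            rw [he]; exact hJ.2
          · ext x
            rcases x with a | a <;>
              by_cases hai : a = i <;>
                simp [hai, hiI, hiJ, Finset.mem_erase, Finset.mem_insert]
        · refine ⟨∅, I.map Function.Embedding.inl ∪ J.map Function.Embedding.inr,
            Or.inl rfl,
            ⟨I, J, ⟨hI, hiI⟩, (dualV' J).2 ⟨hiJ, by rw [lemB hK hc]; exact hJ.2⟩, hd, rfl⟩,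
            (Finset.empty_union _).symm⟩
    · rintro ⟨τ, s, hτ, ⟨I, J, hIL, hJL, hd, rfl⟩, rfl⟩
      obtain ⟨hI, hiI⟩ := hIL
      obtain ⟨hiJ, hJK⟩ := (dualV' J).1 hJL
      have hJdual : J ∈ dualOn Finset.univ K :=
        ⟨Finset.subset_univ _, fun h => hJK ((lemB hK hc _).2 h)⟩
      rcases hτ with rfl | rfl | rfl
      · exact ⟨I, J, hI, hJdual, hd, Finset.empty_union _⟩
      · refine ⟨insert i I, J, hc _ hI, hJdual, Finset.disjoint_insert_left.2 ⟨hiJ, hd⟩, ?_⟩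
        ext x
        rcases x with a | a <;>
          by_cases hai : a = i <;>
            simp [hai, Finset.mem_insert]
      · refine ⟨I, insert i J, hI, ⟨Finset.subset_univ _, ?_⟩,
          Finset.disjoint_insert_right.2 ⟨hiI, hd⟩, ?_⟩
        · have h1 : Finset.univ \ insert i J = (Finset.univ \ J).erase i := by
            ext x; simp [Finset.mem_erase, and_comm]
          rw [h1]; exact hJK
        · ext x
          rcases x with a | a <;>
            by_cases hai : a = i <;>
              simp [hai, Finset.mem_insert]
  · intro heq σ hσ
    by_cases hiσ : i ∈ σ
    · rwa [Finset.insert_eq_self.2 hiσ]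
    by_contra h
    have hS : σ.map Function.Embedding.inl ∪
        (Finset.univ \ insert i σ).map Function.Embedding.inr ∈ bierOn Finset.univ K := by
      refine ⟨σ, Finset.univ \ insert i σ, hσ,
        ⟨Finset.subset_univ _, by rwa [Finset.sdiff_sdiff_eq_self (Finset.subset_univ _)]⟩,
        Finset.disjoint_left.2 fun x hx h2 =>
          (Finset.mem_sdiff.1 h2).2 (Finset.mem_insert_of_mem hx), rfl⟩
    rw [heq] at hS
    obtain ⟨τ, s, hτ, ⟨I, J', hIL, hJL, hd, rfl⟩, hSeq⟩ := hS
    have hτ0 : τ = ∅ := by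
      rcases hτ with rfl | rfl | rfl
      · rfl
      · exfalso
        have h1 : Sum.inl i ∈ σ.map Function.Embedding.inl ∪
            (Finset.univ \ insert i σ).map Function.Embedding.inr := by
          rw [hSeq]; simp
        simp at h1
        exact hiσ h1
      · exfalso
        have h1 : Sum.inr i ∈ σ.map Function.Embedding.inl ∪
            (Finset.univ \ insert i σ).map Function.Embedding.inr := by
          rw [hSeq]; simp
        simp at h1
    subst hτ0
    rw [Finset.empty_union] at hSeq
    obtain ⟨rfl, rfl⟩ := decomp_eq hSeq
    obtain ⟨-, hbad⟩ := (dualV' _).1 hJL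
    rw [Finset.sdiff_sdiff_eq_self (Finset.subset_univ _), Finset.erase_insert hiσ] at hbad
    exact hbad hσ


lemma part1 (hK : IsSimplicialComplex K) (hKne : Finset.univ ∉ K) :
    (∀ σ ∈ K, insert i σ ∈ K) ↔
      (∀ σ ∈ dualOn Finset.univ K, insert i σ ∈ dualOn Finset.univ K) := by
  constructor
  · intro hc J hJ
    refine ⟨Finset.subset_univ _, ?_⟩
    have h1 : Finset.univ \ insert i J = (Finset.univ \ J).erase i := by
      ext x; simp [Finset.mem_erase, and_comm]
    rw [h1, lemB hK hc]
    exact hJ.2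
  · intro hd σ hσ
    by_cases hiσ : i ∈ σ
    · rwa [Finset.insert_eq_self.2 hiσ]
    by_contra h
    have hJ : Finset.univ \ insert i σ ∈ dualOn Finset.univ K := by
      refine ⟨Finset.subset_univ _, ?_⟩
      rwa [Finset.sdiff_sdiff_eq_self (Finset.subset_univ _)]
    have h2 := hd _ hJ
    have h3 : Finset.univ \ insert i (Finset.univ \ insert i σ) = σ := by
      ext x
      by_cases hxi : x = i <;>
        simp [hxi, hiσ, Finset.mem_sdiff, Finset.mem_insert]
    exact h2.2 (h3.symm ▸ hσ)

end Aux

/-- `K` is a cone with apex `i` iff `K^∨` is a cone with apex `i'`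
iff `Bier(K)` is the suspension with vertex pair `{i,i'}` over `Bier(del_K(i))`
(the latter taken with respect to the ground set `[m] \ {i}`). -/
theorem bier_suspension_iff_cone {m : ℕ} (hm : 2 ≤ m) (K : Set (Finset (Fin m)))
    (hK : IsSimplicialComplex K) (hKne : Finset.univ ∉ K) (i : Fin m) :
    ((∀ σ ∈ K, insert i σ ∈ K) ↔
      (∀ σ ∈ dualOn Finset.univ K, insert i σ ∈ dualOn Finset.univ K)) ∧
    ((∀ σ ∈ K, insert i σ ∈ K) ↔
      bierOn Finset.univ K =
        {S | ∃ τ s : Finset (Fin m ⊕ Fin m),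
          (τ = ∅ ∨ τ = {Sum.inl i} ∨ τ = {Sum.inr i}) ∧
          s ∈ bierOn (Finset.univ.erase i) {σ ∈ K | i ∉ σ} ∧ S = τ ∪ s}) :=
  ⟨part1 hK hKne, part2 hK hKne⟩
end

section
/- Let K be a simplicial complex on [m] with m ∈ V(K) and L = del_K(m). Then K is the cone over L with apex m if and only if Bier(L) equals the full subcomplex of Bier(K) on [m−1] ⊔ [(m−1)']. -/
open Finset

lemma union_map_inj {α β : Type*} [DecidableEq α] [DecidableEq β]
    {I I' : Finset α} {J J' : Finset β}
    (h : I.map Function.Embedding.inl ∪ J.map Function.Embedding.inr =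
      I'.map Function.Embedding.inl ∪ J'.map Function.Embedding.inr) :
    I = I' ∧ J = J' := by
  constructor
  · ext a
    have := Finset.ext_iff.mp h (Sum.inl a)
    simpa using this
  · ext b
    have := Finset.ext_iff.mp h (Sum.inr b)
    simpa using this

/-- for a vertex `i` of `K` and `L = del_K(i)`, `K` is the cone
over `L` with apex `i` iff `Bier(L)` (taken on the ground set `[m] \ {i}`)
equals the full subcomplex of `Bier(K)` on `([m] \ {i}) ⊔ ([m'] \ {i'})`. -/
theorem cone_iff_bier_full_subcomplex {m : ℕ} (hm : 2 ≤ m)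
    (K : Set (Finset (Fin m))) (hK : IsSimplicialComplex K)
    (hKne : Finset.univ ∉ K) (i : Fin m) (hi : ({i} : Finset (Fin m)) ∈ K) :
    (∀ σ ∈ K, insert i σ ∈ K) ↔
      bierOn (Finset.univ.erase i) {σ ∈ K | i ∉ σ} =
        {S | S ∈ bierOn Finset.univ K ∧ Sum.inl i ∉ S ∧ Sum.inr i ∉ S} := by
  classical
  constructor
  · intro hcone
    ext S
    constructor
    · rintro ⟨I, J, ⟨hIK, hiI⟩, ⟨hJV, hJc⟩, hdisj, rfl⟩
      have hiJ : i ∉ J := fun h => (Finset.mem_erase.mp (hJV h)).1 rfl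
      refine ⟨⟨I, J, hIK, ⟨Finset.subset_univ J, ?_⟩, hdisj, rfl⟩, ?_, ?_⟩
      · -- univ \ J ∉ K
        intro hmem
        apply hJc
        refine ⟨hK.2 _ hmem _ ?_, ?_⟩
        · intro x hx
          simp only [Finset.mem_sdiff, Finset.mem_erase, Finset.mem_univ, true_and] at hx ⊢
          exact hx.2
        · simp
      · simp [hiI, hiJ]
      · simp [hiI, hiJ]
    · rintro ⟨⟨I, J, hIK, ⟨_, hJc⟩, hdisj, rfl⟩, hl, hr⟩
      have hiI : i ∉ I := by simp at hl; tauto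
      have hiJ : i ∉ J := by simp at hr; tauto
      refine ⟨I, J, ⟨hIK, hiI⟩, ⟨?_, ?_⟩, hdisj, rfl⟩
      · intro x hx
        exact Finset.mem_erase.mpr ⟨fun h => hiJ (h ▸ hx), Finset.mem_univ x⟩
      · -- (univ.erase i) \ J ∉ L
        rintro ⟨hmem, -⟩
        apply hJc
        have : insert i ((Finset.univ.erase i) \ J) = Finset.univ \ J := by
          ext x
          by_cases hx : x = i
          · subst hx; simp [hiJ]
          · simp [hx]
        rw [← this]
        exact hcone _ hmem
  · intro heq σ hσ
    by_cases hiσ : i ∈ σ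
    · rwa [Finset.insert_eq_self.mpr hiσ]
    by_contra hins
    set J : Finset (Fin m) := Finset.univ \ insert i σ with hJdef
    have hiJ : i ∉ J := by simp [hJdef]
    have hS : (σ.map Function.Embedding.inl ∪ J.map Function.Embedding.inr)
        ∈ bierOn (Finset.univ.erase i) {σ ∈ K | i ∉ σ} := by
      rw [heq]
      refine ⟨⟨σ, J, hσ, ⟨Finset.subset_univ _, ?_⟩, ?_, rfl⟩, ?_, ?_⟩
      · have : Finset.univ \ J = insert i σ := by
          simp [hJdef, Finset.sdiff_sdiff_self_left]
        rwa [this]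
      · rw [Finset.disjoint_left]
        intro x hx
        simp [hJdef, Finset.mem_insert, hx]
      · simp [hiσ, hiJ]
      · simp [hiσ, hiJ]
    obtain ⟨I', J', hI', hJ', hd', hEq⟩ := hS
    obtain ⟨hIeq, hJeq⟩ := union_map_inj hEq.symm
    apply hJ'.2
    have hVJ : (Finset.univ.erase i) \ J' = σ := by
      rw [hJeq, hJdef]
      ext x
      by_cases hx : x = i
      · subst hx; simp [hiσ]
      · simp only [Finset.mem_sdiff, Finset.mem_erase, Finset.mem_univ, true_and,
          Finset.mem_insert, not_or, not_and, not_not, and_true]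
        tauto
    rw [hVJ]
    exact ⟨hσ, hiσ⟩
end

section
/- Let m ≥ 5 and 1 ≤ k ≤ m−4, and let K = Δ_[m]^{(k)} be the k-skeleton of the full simplex on [m]. Then the Alexander dual K^∨ is the (m−k−3)-skeleton of the full simplex on [m'], the 1-skeleton of Bier(K) is the complete graph on [m] ⊔ [m'] minus the perfect matching {{i,i'} : i ∈ [m]}, and χ(Bier(K)) = m. -/
open Finset

/-- for `m ≥ 5`, `1 ≤ k ≤ m - 4` and `K` the `k`-skeleton of the
full simplex on `[m]`: `K^∨` is the `(m-k-3)`-skeleton of the simplex on `[m']`,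
the 1-skeleton of `Bier(K)` is the complete graph on `[m] ⊔ [m']` minus the
perfect matching `{{i,i'}}`, and `χ(Bier(K)) = m`. -/
theorem bier_of_skeleton {m k : ℕ} (hm : 5 ≤ m) (hk1 : 1 ≤ k) (hk2 : k ≤ m - 4)
    (K : Set (Finset (Fin m))) (hK : K = {σ : Finset (Fin m) | σ.card ≤ k + 1}) :
    dualK K = {J : Finset (Fin m) | J.card ≤ m - k - 2} ∧
    (∀ a b : Fin m ⊕ Fin m, a ≠ b →
      (({a, b} : Finset (Fin m ⊕ Fin m)) ∈ bier K ↔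
        ∀ i : Fin m, ({a, b} : Finset (Fin m ⊕ Fin m)) ≠ {Sum.inl i, Sum.inr i})) ∧
    chrom (bier K) = m := by
  subst hK
  have hm4 : k + 4 ≤ m := by omega
  set K := {σ : Finset (Fin m) | σ.card ≤ k + 1} with hKdef
  have hdual : dualK K = {J : Finset (Fin m) | J.card ≤ m - k - 2} := by
    ext J
    have hJ : J.card ≤ m := by
      simpa using Finset.card_le_card (Finset.subset_univ J)
    simp only [dualK, hKdef, Set.mem_setOf_eq,
      Finset.card_sdiff_of_subset (Finset.subset_univ J), Finset.card_univ, Fintype.card_fin]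
    omega
  have hmem : ∀ I J : Finset (Fin m), I.card ≤ k + 1 → J.card ≤ m - k - 2 → Disjoint I J →
      (I.map Function.Embedding.inl ∪ J.map Function.Embedding.inr) ∈ bier K := by
    intro I J hI hJ hd
    refine ⟨I, J, hI, ?_, hd, rfl⟩
    rw [hdual]; exact hJ
  refine ⟨hdual, ?_, ?_⟩
  · intro a b hab
    constructor
    · rintro ⟨I, J, hI, hJ, hd, hS⟩ i hi
      have h1 : Sum.inl i ∈ ({a, b} : Finset (Fin m ⊕ Fin m)) := by rw [hi]; simp
      have h2 : Sum.inr i ∈ ({a, b} : Finset (Fin m ⊕ Fin m)) := by rw [hi]; simp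
      rw [hS] at h1 h2
      simp only [Finset.mem_union, Finset.mem_map, Function.Embedding.inl_apply,
        Function.Embedding.inr_apply] at h1 h2
      have hiI : i ∈ I := by
        rcases h1 with ⟨x, hx, hx'⟩ | ⟨x, hx, hx'⟩
        · cases hx'; exact hx
        · exact absurd hx' (by simp)
      have hiJ : i ∈ J := by
        rcases h2 with ⟨x, hx, hx'⟩ | ⟨x, hx, hx'⟩
        · exact absurd hx' (by simp)
        · cases hx'; exact hx
      exact (Finset.disjoint_left.mp hd hiI) hiJ
    · intro hne
      rcases a with i | i <;> rcases b with j | j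
      · have hij : i ≠ j := by rintro rfl; exact hab rfl
        have := hmem {i, j} ∅
          (by rw [Finset.card_insert_of_notMem (by simp [hij])]; simp; omega)
          (by simp) (by simp)
        simpa [Finset.map_insert] using this
      · have hij : i ≠ j := by
          rintro rfl
          exact hne i rfl
        have := hmem {i} {j} (by simp) (by simp; omega)
          (Finset.disjoint_singleton.mpr hij)
        simpa using this
      · have hij : j ≠ i := fun h => hne i (by rw [h, Finset.pair_comm])
        have := hmem {j} {i} (by simp) (by simp; omega)
          (Finset.disjoint_singleton.mpr hij)
        have h2 : ({Sum.inr i, Sum.inl j} : Finset (Fin m ⊕ Fin m))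
            = {Sum.inl j} ∪ {Sum.inr i} := by
          ext x; simp [or_comm]
        rw [h2]
        simpa using this
      · have hij : i ≠ j := by rintro rfl; exact hab rfl
        have hcard : ({i, j} : Finset (Fin m)).card ≤ m - k - 2 := by
          rw [Finset.card_insert_of_notMem (by simp [hij]), Finset.card_singleton]
          omega
        have := hmem ∅ {i, j} (by simp) hcard (by simp)
        simpa [Finset.map_insert] using this
  · -- chromatic number
    have hcol : m ∈ {n : ℕ | ∃ c : (Fin m ⊕ Fin m) → ℕ,
        (∀ i, ({i} : Finset (Fin m ⊕ Fin m)) ∈ bier K → c i < n) ∧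
        ∀ i j, i ≠ j → ({i, j} : Finset (Fin m ⊕ Fin m)) ∈ bier K → c i ≠ c j} := by
      refine ⟨fun x => Sum.elim Fin.val Fin.val x, fun i _ => ?_, ?_⟩
      · rcases i with i | i <;> simpa using i.isLt
      · rintro a b hab hmem' heq
        rcases a with i | i <;> rcases b with j | j <;> simp at heq
        · exact hab (by rw [Fin.val_injective heq])
        · have hij : i = j := Fin.val_injective heq
          subst hij
          rcases hmem' with ⟨I, J, hI, hJ, hd, hS⟩
          have h1 : Sum.inl i ∈ ({Sum.inl i, Sum.inr i} : Finset (Fin m ⊕ Fin m)) := by simp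
          have h2 : Sum.inr i ∈ ({Sum.inl i, Sum.inr i} : Finset (Fin m ⊕ Fin m)) := by simp
          rw [hS] at h1 h2
          simp only [Finset.mem_union, Finset.mem_map, Function.Embedding.inl_apply,
            Function.Embedding.inr_apply] at h1 h2
          have hiI : i ∈ I := by
            rcases h1 with ⟨x, hx, hx'⟩ | ⟨x, hx, hx'⟩
            · cases hx'; exact hx
            · exact absurd hx' (by simp)
          have hiJ : i ∈ J := by
            rcases h2 with ⟨x, hx, hx'⟩ | ⟨x, hx, hx'⟩
            · exact absurd hx' (by simp)
            · cases hx'; exact hx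
          exact (Finset.disjoint_left.mp hd hiI) hiJ
        · have hij : i = j := Fin.val_injective heq
          subst hij
          rcases hmem' with ⟨I, J, hI, hJ, hd, hS⟩
          have h1 : Sum.inl i ∈ ({Sum.inr i, Sum.inl i} : Finset (Fin m ⊕ Fin m)) := by simp
          have h2 : Sum.inr i ∈ ({Sum.inr i, Sum.inl i} : Finset (Fin m ⊕ Fin m)) := by simp
          rw [hS] at h1 h2
          simp only [Finset.mem_union, Finset.mem_map, Function.Embedding.inl_apply,
            Function.Embedding.inr_apply] at h1 h2
          have hiI : i ∈ I := by
            rcases h1 with ⟨x, hx, hx'⟩ | ⟨x, hx, hx'⟩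
            · cases hx'; exact hx
            · exact absurd hx' (by simp)
          have hiJ : i ∈ J := by
            rcases h2 with ⟨x, hx, hx'⟩ | ⟨x, hx, hx'⟩
            · exact absurd hx' (by simp)
            · cases hx'; exact hx
          exact (Finset.disjoint_left.mp hd hiI) hiJ
        · exact hab (by rw [Fin.val_injective heq])
    refine le_antisymm (Nat.sInf_le hcol) (le_csInf ⟨m, hcol⟩ ?_)
    rintro n ⟨c, hc1, hc2⟩
    -- c ∘ inl is injective into range n
    have hsingle : ∀ i : Fin m, ({Sum.inl i} : Finset (Fin m ⊕ Fin m)) ∈ bier K := by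
      intro i
      have := hmem {i} ∅ (by simp) (by simp) (by simp)
      simpa using this
    have hedge : ∀ i j : Fin m, i ≠ j →
        ({Sum.inl i, Sum.inl j} : Finset (Fin m ⊕ Fin m)) ∈ bier K := by
      intro i j hij
      have := hmem {i, j} ∅ (by rw [Finset.card_insert_of_notMem (by simp [hij])]; simp; omega)
        (by simp) (by simp)
      simpa [Finset.map_insert] using this
    have hinj : Function.Injective (fun i : Fin m => c (Sum.inl i)) := by
      intro i j h
      by_contra hij
      exact hc2 (Sum.inl i) (Sum.inl j) (by simp [hij]) (hedge i j hij) h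
    have : Fintype.card (Fin m) ≤ n := by
      have hmaps : ∀ i : Fin m, (⟨c (Sum.inl i), hc1 _ (hsingle i)⟩ : Fin n) ∈ Finset.univ :=
        fun _ => Finset.mem_univ _
      have : Function.Injective (fun i : Fin m => (⟨c (Sum.inl i), hc1 _ (hsingle i)⟩ : Fin n)) := by
        intro i j h
        exact hinj (by simpa using congrArg Fin.val h)
      calc Fintype.card (Fin m) ≤ Fintype.card (Fin n) := Fintype.card_le_of_injective _ this
        _ = n := Fintype.card_fin n
    simpa using this
end

section
/- Let K ≠ 2^[m] be a simplicial complex on [m] with m ≥ 4 such that both K and K^∨ have no ghost vertices (f₀(K) = f₀(K^∨) = m). If χ(Bier(K)) = m−1, then Bier(K) is a weak suspension. -/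
open Finset

/-! ### Auxiliary lemmas -/

section BierBasic
variable {m : ℕ} {K : Set (Finset (Fin m))}

lemma WS_empty_mem_dual (hKne : Finset.univ ∉ K) : (∅ : Finset (Fin m)) ∈ dualK K := by
  simpa [dualK] using hKne

lemma WS_single_inl (hKne : Finset.univ ∉ K) {i : Fin m} (hi : ({i}:Finset (Fin m)) ∈ K) :
    ({Sum.inl i} : Finset (Fin m ⊕ Fin m)) ∈ bier K :=
  ⟨{i}, ∅, hi, WS_empty_mem_dual hKne, by simp, by simp⟩

lemma WS_single_inr (hK : IsSimplicialComplex K) {i : Fin m}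
    (hi : ({i}:Finset (Fin m)) ∈ dualK K) :
    ({Sum.inr i} : Finset (Fin m ⊕ Fin m)) ∈ bier K :=
  ⟨∅, {i}, hK.1, hi, by simp, by simp⟩

lemma WS_edge_ll (hKne : Finset.univ ∉ K) {i j : Fin m} (hij : ({i,j}:Finset (Fin m)) ∈ K) :
    ({Sum.inl i, Sum.inl j} : Finset (Fin m ⊕ Fin m)) ∈ bier K :=
  ⟨{i,j}, ∅, hij, WS_empty_mem_dual hKne, by simp, by simp⟩

lemma WS_edge_rr (hK : IsSimplicialComplex K) {i j : Fin m}
    (hij : ({i,j}:Finset (Fin m)) ∈ dualK K) :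
    ({Sum.inr i, Sum.inr j} : Finset (Fin m ⊕ Fin m)) ∈ bier K :=
  ⟨∅, {i,j}, hK.1, hij, by simp, by simp⟩

lemma WS_edge_lr (hv : ∀ i : Fin m, ({i} : Finset (Fin m)) ∈ K)
    (hv' : ∀ i : Fin m, ({i} : Finset (Fin m)) ∈ dualK K)
    {i j : Fin m} (hij : i ≠ j) :
    ({Sum.inl i, Sum.inr j} : Finset (Fin m ⊕ Fin m)) ∈ bier K :=
  ⟨{i}, {j}, hv i, hv' j, by simp [hij], by
    rw [Finset.map_singleton, Finset.map_singleton]; rfl⟩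

lemma WS_no_diag_edge (a : Fin m) :
    ({Sum.inl a, Sum.inr a} : Finset (Fin m ⊕ Fin m)) ∉ bier K := by
  rintro ⟨I, J, hI, hJ, hd, hS⟩
  have h1 : (Sum.inl a : Fin m ⊕ Fin m) ∈ I.map Function.Embedding.inl ∪ J.map Function.Embedding.inr := by
    rw [← hS]; simp
  have h2 : (Sum.inr a : Fin m ⊕ Fin m) ∈ I.map Function.Embedding.inl ∪ J.map Function.Embedding.inr := by
    rw [← hS]; simp
  have ha1 : a ∈ I := by
    rcases Finset.mem_union.1 h1 with h | h
    · obtain ⟨x, hx, he⟩ := Finset.mem_map.1 h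
      cases he; exact hx
    · obtain ⟨x, hx, he⟩ := Finset.mem_map.1 h
      simp [Function.Embedding.inr] at he
  have ha2 : a ∈ J := by
    rcases Finset.mem_union.1 h2 with h | h
    · obtain ⟨x, hx, he⟩ := Finset.mem_map.1 h
      simp [Function.Embedding.inl] at he
    · obtain ⟨x, hx, he⟩ := Finset.mem_map.1 h
      cases he; exact hx
  exact Finset.disjoint_left.1 hd ha1 ha2
end BierBasic

section PureLogic
variable {α : Type*}

lemma WS_orswap {a b c d : α} (h : a = c ∨ a = d ∨ b = c ∨ b = d) :
    c = a ∨ c = b ∨ d = a ∨ d = b := by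
  rcases h with h | h | h | h
  · exact Or.inl h.symm
  · exact Or.inr (Or.inr (Or.inl h.symm))
  · exact Or.inr (Or.inl h.symm)
  · exact Or.inr (Or.inr (Or.inr h.symm))

lemma WS_L1 {p1 p2 u v w : α} (hp : p1 ≠ p2)
    (huv : u ≠ v) (huw : u ≠ w) (hvw : v ≠ w)
    (h1 : p1 = u ∨ p1 = v ∨ p2 = u ∨ p2 = v)
    (h2 : p1 = u ∨ p1 = w ∨ p2 = u ∨ p2 = w)
    (h3 : p1 = v ∨ p1 = w ∨ p2 = v ∨ p2 = w) :
    (p1 = u ∨ p1 = v ∨ p1 = w) ∧ (p2 = u ∨ p2 = v ∨ p2 = w) := by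
  rcases h1 with h1 | h1 | h1 | h1 <;> rcases h2 with h2 | h2 | h2 | h2 <;>
    rcases h3 with h3 | h3 | h3 | h3 <;> simp_all

lemma WS_L2 {p1 p2 k l k' l' : α} (hp : p1 ≠ p2)
    (hkl : k ≠ l) (hk'l' : k' ≠ l') (hkk' : k ≠ k') (hkl' : k ≠ l')
    (hlk' : l ≠ k') (hll' : l ≠ l')
    (h1 : p1 = k ∨ p1 = l ∨ p2 = k ∨ p2 = l)
    (h2 : p1 = k' ∨ p1 = l' ∨ p2 = k' ∨ p2 = l') :
    (p1 = k ∨ p1 = l ∨ p1 = k' ∨ p1 = l') ∧ (p2 = k ∨ p2 = l ∨ p2 = k' ∨ p2 = l') := by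
  rcases h1 with h1 | h1 | h1 | h1 <;> rcases h2 with h2 | h2 | h2 | h2 <;> simp_all

lemma WS_L3 {i j k l u v w : α} (hij : i ≠ j) (hik : i ≠ k) (hil : i ≠ l)
    (hjk : j ≠ k) (hjl : j ≠ l) (hkl : k ≠ l)
    (mi : i = u ∨ i = v ∨ i = w) (mj : j = u ∨ j = v ∨ j = w)
    (mk : k = u ∨ k = v ∨ k = w) (ml : l = u ∨ l = v ∨ l = w) : False := by
  rcases mi with mi | mi | mi <;> rcases mj with mj | mj | mj <;>
    rcases mk with mk | mk | mk <;> rcases ml with ml | ml | ml <;> simp_all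

lemma WS_L4 {a i j k u v w : α} (h : a = i ∨ a = j ∨ a = k)
    (mi : i = u ∨ i = v ∨ i = w) (mj : j = u ∨ j = v ∨ j = w)
    (mk : k = u ∨ k = v ∨ k = w)
    (ha1 : a ≠ u) (ha2 : a ≠ v) (ha3 : a ≠ w) : False := by
  rcases h with h | h | h <;> rcases mi with mi | mi | mi <;>
    rcases mj with mj | mj | mj <;> rcases mk with mk | mk | mk <;> simp_all

lemma WS_L5 {a p q r t k l k' l' : α} (h : a = p ∨ a = q ∨ a = r ∨ a = t)
    (mp : p = k ∨ p = l ∨ p = k' ∨ p = l') (mq : q = k ∨ q = l ∨ q = k' ∨ q = l')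
    (mr : r = k ∨ r = l ∨ r = k' ∨ r = l') (mt : t = k ∨ t = l ∨ t = k' ∨ t = l')
    (ha1 : a ≠ k) (ha2 : a ≠ l) (ha3 : a ≠ k') (ha4 : a ≠ l') : False := by
  rcases h with h | h | h | h <;> rcases mp with mp | mp | mp | mp <;>
    rcases mq with mq | mq | mq | mq <;> rcases mr with mr | mr | mr | mr <;>
    rcases mt with mt | mt | mt | mt <;> simp_all
end PureLogic

lemma WS_avoid4 {m : ℕ} (hm : 5 ≤ m) (k l k' l' : Fin m) :
    ∃ a : Fin m, a ≠ k ∧ a ≠ l ∧ a ≠ k' ∧ a ≠ l' := by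
  by_contra h
  push_neg at h
  have hsub : (Finset.univ : Finset (Fin m)) ⊆ {k, l, k', l'} := by
    intro a _
    by_cases h1 : a = k
    · simp [h1]
    by_cases h2 : a = l
    · simp [h2]
    by_cases h3 : a = k'
    · simp [h3]
    · simp [h a h1 h2 h3]
  have hc := Finset.card_le_card hsub
  rw [Finset.card_univ, Fintype.card_fin] at hc
  have h4 : ({k, l, k', l'} : Finset (Fin m)).card ≤ 4 := by
    apply le_trans (Finset.card_insert_le _ _)
    apply Nat.succ_le_succ
    apply le_trans (Finset.card_insert_le _ _)
    apply Nat.succ_le_succ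
    apply le_trans (Finset.card_insert_le _ _)
    simp
  omega

lemma WS_avoid3 {m : ℕ} (hm : 4 ≤ m) (u v w : Fin m) :
    ∃ a : Fin m, a ≠ u ∧ a ≠ v ∧ a ≠ w := by
  by_contra h
  push_neg at h
  have hsub : (Finset.univ : Finset (Fin m)) ⊆ {u, v, w} := by
    intro a _
    by_cases h1 : a = u
    · simp [h1]
    by_cases h2 : a = v
    · simp [h2]
    · simp [h a h1 h2]
  have hc := Finset.card_le_card hsub
  rw [Finset.card_univ, Fintype.card_fin] at hc
  have h4 : ({u, v, w} : Finset (Fin m)).card ≤ 3 := by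
    apply le_trans (Finset.card_insert_le _ _)
    apply Nat.succ_le_succ
    apply le_trans (Finset.card_insert_le _ _)
    simp
  omega

section Cases
variable {m : ℕ} {P Q : Fin m → Fin m → Prop}

lemma WS_caseA (hm : 4 ≤ m)
    (hPne : ∀ i j, P i j → i ≠ j) (hQne : ∀ i j, Q i j → i ≠ j)
    (cross : ∀ i j k l, P i j → Q k l → i = k ∨ i = l ∨ j = k ∨ j = l)
    (htri : ∃ u v w, u ≠ v ∧ u ≠ w ∧ v ≠ w ∧ P u v ∧ P u w ∧ P v w)
    (hQbig : (∃ i j k, i ≠ j ∧ i ≠ k ∧ j ≠ k ∧ Q i j ∧ Q i k ∧ Q j k) ∨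
      (∃ i j k l, i ≠ j ∧ k ≠ l ∧ i ≠ k ∧ i ≠ l ∧ j ≠ k ∧ j ≠ l ∧ Q i j ∧ Q k l)) :
    ∃ a, ∀ j, ¬ P a j ∧ ¬ Q a j := by
  obtain ⟨u, v, w, huv, huw, hvw, hPuv, hPuw, hPvw⟩ := htri
  have keyQ : ∀ k l, Q k l → (k = u ∨ k = v ∨ k = w) ∧ (l = u ∨ l = v ∨ l = w) :=
    fun k l hkl => WS_L1 (hQne k l hkl) huv huw hvw
      (WS_orswap (cross u v k l hPuv hkl)) (WS_orswap (cross u w k l hPuw hkl))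
      (WS_orswap (cross v w k l hPvw hkl))
  rcases hQbig with ⟨i, j, k, hij, hik, hjk, hQij, hQik, hQjk⟩ |
      ⟨i, j, k, l, hij, hkl, hik, hil, hjk, hjl, hQij, hQkl⟩
  · have mi := (keyQ i j hQij).1
    have mj := (keyQ i j hQij).2
    have mk := (keyQ j k hQjk).2
    have keyP : ∀ a b, P a b → (a = i ∨ a = j ∨ a = k) ∧ (b = i ∨ b = j ∨ b = k) :=
      fun a b hab => WS_L1 (hPne a b hab) hij hik hjk
        (cross a b i j hab hQij) (cross a b i k hab hQik) (cross a b j k hab hQjk)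
    obtain ⟨a, ha1, ha2, ha3⟩ := WS_avoid3 hm u v w
    refine ⟨a, fun z => ⟨fun hP' => ?_, fun hQ' => ?_⟩⟩
    · exact WS_L4 (keyP a z hP').1 mi mj mk ha1 ha2 ha3
    · rcases (keyQ a z hQ').1 with h | h | h
      exacts [ha1 h, ha2 h, ha3 h]
  · exact absurd (WS_L3 hij hik hil hjk hjl hkl (keyQ i j hQij).1 (keyQ i j hQij).2
      (keyQ k l hQkl).1 (keyQ k l hQkl).2) not_false

lemma WS_caseB (hm : 5 ≤ m)
    (hPne : ∀ i j, P i j → i ≠ j) (hQne : ∀ i j, Q i j → i ≠ j)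
    (cross : ∀ i j k l, P i j → Q k l → i = k ∨ i = l ∨ j = k ∨ j = l)
    (hP : ∃ p q r t, p ≠ q ∧ r ≠ t ∧ p ≠ r ∧ p ≠ t ∧ q ≠ r ∧ q ≠ t ∧ P p q ∧ P r t)
    (hQ : ∃ p q r t, p ≠ q ∧ r ≠ t ∧ p ≠ r ∧ p ≠ t ∧ q ≠ r ∧ q ≠ t ∧ Q p q ∧ Q r t) :
    ∃ a, ∀ j, ¬ P a j ∧ ¬ Q a j := by
  obtain ⟨p, q, r, t, hpq, hrt, hpr, hpt, hqr, hqt, hP1, hP2⟩ := hP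
  obtain ⟨k, l, k', l', hkl, hk'l', hkk', hkl', hlk', hll', hQ1, hQ2⟩ := hQ
  have keyP : ∀ i j, P i j → (i = k ∨ i = l ∨ i = k' ∨ i = l') ∧
      (j = k ∨ j = l ∨ j = k' ∨ j = l') :=
    fun i j hij => WS_L2 (hPne i j hij) hkl hk'l' hkk' hkl' hlk' hll'
      (cross i j k l hij hQ1) (cross i j k' l' hij hQ2)
  have keyQ : ∀ i j, Q i j → (i = p ∨ i = q ∨ i = r ∨ i = t) ∧
      (j = p ∨ j = q ∨ j = r ∨ j = t) :=
    fun i j hij => WS_L2 (hQne i j hij) hpq hrt hpr hpt hqr hqt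
      (WS_orswap (cross p q i j hP1 hij)) (WS_orswap (cross r t i j hP2 hij))
  obtain ⟨a, ha1, ha2, ha3, ha4⟩ := WS_avoid4 hm k l k' l'
  have hp := (keyP p q hP1).1
  have hq := (keyP p q hP1).2
  have hr := (keyP r t hP2).1
  have ht := (keyP r t hP2).2
  refine ⟨a, fun z => ⟨fun hP' => ?_, fun hQ' => ?_⟩⟩
  · rcases (keyP a z hP').1 with h | h | h | h
    exacts [ha1 h, ha2 h, ha3 h, ha4 h]
  · exact WS_L5 (keyQ a z hQ').1 hp hq hr ht ha1 ha2 ha3 ha4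
end Cases

lemma WS_count {m : ℕ} (hm : 1 ≤ m) (cl cr : Fin m → ℕ)
    (hcl : ∀ i, cl i < m - 1) (hcr : ∀ i, cr i < m - 1)
    (cross : ∀ i j, i ≠ j → cl i ≠ cr j) :
    (Finset.univ.image cl).card + 2 ≤ m ∧ (Finset.univ.image cr).card + 2 ≤ m := by
  set A := Finset.univ.image cl with hA
  set B := Finset.univ.image cr with hB
  set D := Finset.univ.filter (fun i => cl i = cr i) with hD
  have hAB : A ∪ B ⊆ Finset.range (m - 1) := by
    intro t ht
    rcases Finset.mem_union.1 ht with h | h <;>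
    · obtain ⟨i, _, rfl⟩ := Finset.mem_image.1 h
      simp only [Finset.mem_range]
      first | exact hcl i | exact hcr i
  have hABcard : (A ∪ B).card ≤ m - 1 := le_trans (Finset.card_le_card hAB) (by simp)
  have hi0 : ∃ i0, cl i0 ≠ cr i0 := by
    by_contra h
    push_neg at h
    have hinj : Function.Injective cl := by
      intro i j hij
      by_contra hne
      exact cross i j hne (hij.trans (h j))
    have : A.card = m := by
      rw [hA, Finset.card_image_of_injective _ hinj, Finset.card_univ, Fintype.card_fin]
    have h2 : A.card ≤ m - 1 :=
      le_trans (Finset.card_le_card (fun t ht => hAB (Finset.mem_union_left _ ht))) (by simp)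
    omega
  obtain ⟨i0, hi0⟩ := hi0
  have hi0D : i0 ∉ D := by simp [hD, hi0]
  have hclinj : Set.InjOn cl (insert i0 D : Finset (Fin m)) := by
    intro i hi j hj hij
    by_contra hne
    simp only [Finset.coe_insert, Set.mem_insert_iff, Finset.mem_coe, hD,
      Finset.mem_filter] at hi hj
    rcases hj with rfl | ⟨_, hj⟩
    · rcases hi with rfl | ⟨_, hi⟩
      · exact hne rfl
      · exact cross j i (Ne.symm hne) (hij.symm.trans hi)
    · exact cross i j hne (hij.trans hj)
  have hcrinj : Set.InjOn cr (insert i0 D : Finset (Fin m)) := by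
    intro i hi j hj hij
    by_contra hne
    simp only [Finset.coe_insert, Set.mem_insert_iff, Finset.mem_coe, hD,
      Finset.mem_filter] at hi hj
    rcases hi with rfl | ⟨_, hi⟩
    · rcases hj with rfl | ⟨_, hj⟩
      · exact hne rfl
      · exact cross j i (Ne.symm hne) (hj.trans hij.symm)
    · exact cross i j hne (hi.trans hij)
  have hcardA : D.card + 1 ≤ A.card := by
    have h1 : ((insert i0 D).image cl).card = (insert i0 D).card :=
      Finset.card_image_of_injOn hclinj
    have h2 : (insert i0 D).image cl ⊆ A :=
      Finset.image_subset_image (Finset.subset_univ _)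
    have := Finset.card_le_card h2
    rw [h1, Finset.card_insert_of_notMem hi0D] at this
    omega
  have hcardB : D.card + 1 ≤ B.card := by
    have h1 : ((insert i0 D).image cr).card = (insert i0 D).card :=
      Finset.card_image_of_injOn hcrinj
    have h2 : (insert i0 D).image cr ⊆ B :=
      Finset.image_subset_image (Finset.subset_univ _)
    have := Finset.card_le_card h2
    rw [h1, Finset.card_insert_of_notMem hi0D] at this
    omega
  have hint : A ∩ B ⊆ D.image cl := by
    intro t ht
    obtain ⟨h1, h2⟩ := Finset.mem_inter.1 ht
    obtain ⟨i, _, rfl⟩ := Finset.mem_image.1 h1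
    obtain ⟨j, _, hj⟩ := Finset.mem_image.1 h2
    have hij : i = j := by
      by_contra hne
      exact cross i j hne hj.symm
    subst hij
    exact Finset.mem_image.2 ⟨i, by simp [hD, hj.symm], rfl⟩
  have hintcard : (A ∩ B).card ≤ D.card :=
    le_trans (Finset.card_le_card hint) (Finset.card_image_le)
  have hsum : A.card + B.card = (A ∪ B).card + (A ∩ B).card :=
    (Finset.card_union_add_card_inter A B).symm
  omega

lemma WS_struct {m : ℕ} (f : Fin m → ℕ)
    (h : (Finset.univ.image f).card + 2 ≤ m) :
    (∃ i j k : Fin m, i ≠ j ∧ i ≠ k ∧ j ≠ k ∧ f i = f j ∧ f i = f k) ∨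
    (∃ i j k l : Fin m, i ≠ j ∧ k ≠ l ∧ i ≠ k ∧ i ≠ l ∧ j ≠ k ∧ j ≠ l ∧
      f i = f j ∧ f k = f l) := by
  have hmaps : ∀ a ∈ (Finset.univ : Finset (Fin m)), f a ∈ Finset.univ.image f :=
    fun a ha => Finset.mem_image_of_mem f ha
  have h1 : (Finset.univ.image f).card < (Finset.univ : Finset (Fin m)).card := by
    rw [Finset.card_univ, Fintype.card_fin]; omega
  obtain ⟨i, _, j, _, hij, hfij⟩ :=
    Finset.exists_ne_map_eq_of_card_lt_of_maps_to h1 hmaps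
  have h2 : (Finset.univ.image f).card < (Finset.univ.erase j).card := by
    rw [Finset.card_erase_of_mem (Finset.mem_univ j), Finset.card_univ, Fintype.card_fin]
    omega
  obtain ⟨k, hk, l, hl, hkl, hfkl⟩ :=
    Finset.exists_ne_map_eq_of_card_lt_of_maps_to h2
      (fun a _ => Finset.mem_image_of_mem f (Finset.mem_univ a))
  have hkj : k ≠ j := Finset.ne_of_mem_erase hk
  have hlj : l ≠ j := Finset.ne_of_mem_erase hl
  by_cases hki : k = i
  · subst hki
    exact Or.inl ⟨k, j, l, hij, hkl, fun h => hlj h.symm, hfij, hfkl⟩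
  by_cases hli : l = i
  · subst hli
    exact Or.inl ⟨l, j, k, hij, fun h => hki h.symm, fun h => hkj h.symm, hfij, hfkl.symm⟩
  · exact Or.inr ⟨i, j, k, l, hij, hkl, fun h => hki h.symm, fun h => hli h.symm,
      fun h => hkj h.symm, fun h => hlj h.symm, hfij, hfkl⟩

set_option maxRecDepth 40000 in
lemma WS_m4 : ∀ cl cr : Fin 4 → Fin 3,
    (∀ i j, i ≠ j → cl i ≠ cr j) →
    (∃ i j k : Fin 4, i ≠ j ∧ i ≠ k ∧ j ≠ k ∧
      ((cl i = cl j ∧ cl i = cl k) ∨ (cr i = cr j ∧ cr i = cr k))) := by decide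


/-- if `m ≥ 4`, neither `K` nor `K^∨` has ghost vertices
(`f₀(K) = f₀(K^∨) = m`), and `χ(Bier(K)) = m - 1`, then `Bier(K)` is a weak
suspension. -/
theorem min_chrom_implies_weak_suspension {m : ℕ} (hm : 4 ≤ m)
    (K : Set (Finset (Fin m))) (hK : IsSimplicialComplex K)
    (hKne : Finset.univ ∉ K)
    (hv : ∀ i : Fin m, ({i} : Finset (Fin m)) ∈ K)
    (hv' : ∀ i : Fin m, ({i} : Finset (Fin m)) ∈ dualK K)
    (hchi : chrom (bier K) = m - 1) :
    ∃ a b : Fin m ⊕ Fin m, IsWeakSuspensionPair (bier K) a b := by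
  classical
  -- the chromatic set is nonempty, so its infimum is attained
  set S : Set ℕ := {n : ℕ | ∃ c : (Fin m ⊕ Fin m) → ℕ,
    (∀ i, ({i} : Finset (Fin m ⊕ Fin m)) ∈ bier K → c i < n) ∧
    ∀ i j, i ≠ j → ({i, j} : Finset (Fin m ⊕ Fin m)) ∈ bier K → c i ≠ c j} with hS
  have hSne : S.Nonempty := by
    refine ⟨2 * m, Sum.elim (fun i => (i : ℕ)) (fun i => m + (i : ℕ)), fun i _ => ?_, ?_⟩
    · cases i with
      | inl a => have := a.isLt; simp only [Sum.elim_inl]; omega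
      | inr a => have := a.isLt; simp only [Sum.elim_inr]; omega
    · intro i j hij _
      cases i with
      | inl a =>
        cases j with
        | inl b =>
          simp only [Sum.elim_inl]
          exact fun h => hij (congrArg Sum.inl (Fin.val_injective h))
        | inr b =>
          have := a.isLt
          simp only [Sum.elim_inl, Sum.elim_inr]
          omega
      | inr a =>
        cases j with
        | inl b =>
          have := b.isLt
          simp only [Sum.elim_inl, Sum.elim_inr]
          omega
        | inr b =>
          simp only [Sum.elim_inr]
          intro h
          exact hij (congrArg Sum.inr (Fin.val_injective (by omega)))
  have hmem : m - 1 ∈ S := by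
    have : chrom (bier K) ∈ S := Nat.sInf_mem hSne
    rwa [hchi] at this
  obtain ⟨c, hc1, hc2⟩ := hmem
  set cl : Fin m → ℕ := fun i => c (Sum.inl i) with hcl_def
  set cr : Fin m → ℕ := fun i => c (Sum.inr i) with hcr_def
  have hcl : ∀ i, cl i < m - 1 := fun i => hc1 _ (WS_single_inl hKne (hv i))
  have hcr : ∀ i, cr i < m - 1 := fun i => hc1 _ (WS_single_inr hK (hv' i))
  have crossc : ∀ i j, i ≠ j → cl i ≠ cr j := fun i j hij =>
    hc2 (Sum.inl i) (Sum.inr j) (by simp) (WS_edge_lr hv hv' hij)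
  -- the non-edge relations
  set P : Fin m → Fin m → Prop := fun i j => i ≠ j ∧ ({i, j} : Finset (Fin m)) ∉ K with hP_def
  set Q : Fin m → Fin m → Prop :=
    fun i j => i ≠ j ∧ ({i, j} : Finset (Fin m)) ∉ dualK K with hQ_def
  have hPne : ∀ i j, P i j → i ≠ j := fun _ _ h => h.1
  have hQne : ∀ i j, Q i j → i ≠ j := fun _ _ h => h.1
  have cross : ∀ i j k l, P i j → Q k l → i = k ∨ i = l ∨ j = k ∨ j = l := by
    intro i j k l hPij hQkl
    by_contra hno
    push_neg at hno
    obtain ⟨h1, h2, h3, h4⟩ := hno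
    have hQ' : (Finset.univ \ {k, l} : Finset (Fin m)) ∈ K := not_not.1 hQkl.2
    have hsub : ({i, j} : Finset (Fin m)) ⊆ Finset.univ \ {k, l} := by
      intro x hx
      rcases Finset.mem_insert.1 hx with rfl | hx
      · simp [h1, h2]
      · rcases Finset.mem_singleton.1 hx with rfl
        simp [h3, h4]
    exact hPij.2 (hK.2 _ hQ' _ hsub)
  -- non-edges from repeated colors
  have nonP : ∀ i j, i ≠ j → cl i = cl j → P i j := fun i j hij hcc =>
    ⟨hij, fun hmem => hc2 (Sum.inl i) (Sum.inl j) (by simp [hij]) (WS_edge_ll hKne hmem) hcc⟩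
  have nonQ : ∀ i j, i ≠ j → cr i = cr j → Q i j := fun i j hij hcc =>
    ⟨hij, fun hmem => hc2 (Sum.inr i) (Sum.inr j) (by simp [hij]) (WS_edge_rr hK hmem) hcc⟩
  -- structure on both sides
  obtain ⟨hcardl, hcardr⟩ := WS_count (by omega) cl cr hcl hcr crossc
  have Pbig : (∃ i j k, i ≠ j ∧ i ≠ k ∧ j ≠ k ∧ P i j ∧ P i k ∧ P j k) ∨
      (∃ i j k l, i ≠ j ∧ k ≠ l ∧ i ≠ k ∧ i ≠ l ∧ j ≠ k ∧ j ≠ l ∧ P i j ∧ P k l) := by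
    rcases WS_struct cl hcardl with ⟨i, j, k, hij, hik, hjk, e1, e2⟩ |
        ⟨i, j, k, l, hij, hkl, hik, hil, hjk, hjl, e1, e2⟩
    · exact Or.inl ⟨i, j, k, hij, hik, hjk, nonP i j hij e1, nonP i k hik e2,
        nonP j k hjk (e1.symm.trans e2)⟩
    · exact Or.inr ⟨i, j, k, l, hij, hkl, hik, hil, hjk, hjl,
        nonP i j hij e1, nonP k l hkl e2⟩
  have Qbig : (∃ i j k, i ≠ j ∧ i ≠ k ∧ j ≠ k ∧ Q i j ∧ Q i k ∧ Q j k) ∨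
      (∃ i j k l, i ≠ j ∧ k ≠ l ∧ i ≠ k ∧ i ≠ l ∧ j ≠ k ∧ j ≠ l ∧ Q i j ∧ Q k l) := by
    rcases WS_struct cr hcardr with ⟨i, j, k, hij, hik, hjk, e1, e2⟩ |
        ⟨i, j, k, l, hij, hkl, hik, hil, hjk, hjl, e1, e2⟩
    · exact Or.inl ⟨i, j, k, hij, hik, hjk, nonQ i j hij e1, nonQ i k hik e2,
        nonQ j k hjk (e1.symm.trans e2)⟩
    · exact Or.inr ⟨i, j, k, l, hij, hkl, hik, hil, hjk, hjl,
        nonQ i j hij e1, nonQ k l hkl e2⟩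
  have cross' : ∀ i j k l, Q i j → P k l → i = k ∨ i = l ∨ j = k ∨ j = l :=
    fun i j k l hq hp => WS_orswap (cross k l i j hp hq)
  -- derive the good vertex
  have hgood : ∃ a, ∀ j, ¬ P a j ∧ ¬ Q a j := by
    rcases Pbig with Ptri | Ppairs
    · exact WS_caseA hm hPne hQne cross Ptri Qbig
    rcases Qbig with Qtri | Qpairs
    · obtain ⟨a, ha⟩ := WS_caseA hm hQne hPne cross' Qtri (Or.inr Ppairs)
      exact ⟨a, fun j => (ha j).symm⟩
    by_cases h5 : 5 ≤ m
    · exact WS_caseB h5 hPne hQne cross Ppairs Qpairs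
    · -- m = 4 : a color triple must exist on one of the two sides
      have hm4 : m = 4 := by omega
      subst hm4
      have hcl3 : ∀ i, cl i < 3 := hcl
      have hcr3 : ∀ i, cr i < 3 := hcr
      set cl4 : Fin 4 → Fin 3 := fun i => ⟨cl i, hcl3 i⟩ with hcl4
      set cr4 : Fin 4 → Fin 3 := fun i => ⟨cr i, hcr3 i⟩ with hcr4
      have cross4 : ∀ i j, i ≠ j → cl4 i ≠ cr4 j := fun i j hij h =>
        crossc i j hij (congrArg Fin.val h)
      obtain ⟨i, j, k, hij, hik, hjk, htr⟩ := WS_m4 cl4 cr4 cross4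
      rcases htr with ⟨e1, e2⟩ | ⟨e1, e2⟩
      · have f1 : cl i = cl j := congrArg Fin.val e1
        have f2 : cl i = cl k := congrArg Fin.val e2
        exact WS_caseA (le_refl 4) hPne hQne cross
          ⟨i, j, k, hij, hik, hjk, nonP i j hij f1, nonP i k hik f2,
            nonP j k hjk (f1.symm.trans f2)⟩ (Or.inr Qpairs)
      · have f1 : cr i = cr j := congrArg Fin.val e1
        have f2 : cr i = cr k := congrArg Fin.val e2
        obtain ⟨a, ha⟩ := WS_caseA (le_refl 4) hQne hPne cross'
          ⟨i, j, k, hij, hik, hjk, nonQ i j hij f1, nonQ i k hik f2,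
            nonQ j k hjk (f1.symm.trans f2)⟩ (Or.inr Ppairs)
        exact ⟨a, fun j => (ha j).symm⟩
  obtain ⟨a, ha⟩ := hgood
  have hKa : ∀ j, j ≠ a → ({a, j} : Finset (Fin m)) ∈ K := fun j hja => by
    by_contra hn
    exact (ha j).1 ⟨Ne.symm hja, hn⟩
  have hQa : ∀ j, j ≠ a → ({a, j} : Finset (Fin m)) ∈ dualK K := fun j hja => by
    by_contra hn
    exact (ha j).2 ⟨Ne.symm hja, hn⟩
  refine ⟨Sum.inl a, Sum.inr a, by simp, WS_single_inl hKne (hv a),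
    WS_single_inr hK (hv' a), WS_no_diag_edge a, ?_⟩
  intro v _ hv1 hv2
  cases v with
  | inl j =>
    have hja : j ≠ a := fun h => hv1 (congrArg Sum.inl h)
    constructor
    · exact WS_edge_ll hKne (hKa j hja)
    · have hpc : ({Sum.inr a, Sum.inl j} : Finset (Fin m ⊕ Fin m)) =
          {Sum.inl j, Sum.inr a} := Finset.pair_comm _ _
      rw [hpc]
      exact WS_edge_lr hv hv' hja
  | inr j =>
    have hja : j ≠ a := fun h => hv2 (congrArg Sum.inr h)
    constructor
    · exact WS_edge_lr hv hv' (Ne.symm hja)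
    · exact WS_edge_rr hK (hQa j hja)
end

section
/- For every simplicial complex K ≠ 2^[m] on [m] with m ≥ 2, one has m−1 ≤ χ(Bier(K)) ≤ m; i.e., the chromatic number of a (m−2)-dimensional Bier sphere is either m−1 or m. -/
open Finset

/-- for every simplicial complex `K ≠ 2^[m]` on `[m]`, `m ≥ 2`,
one has `m - 1 ≤ χ(Bier(K)) ≤ m`. -/
theorem chrom_bier_m_or_m_sub_one {m : ℕ} (hm : 2 ≤ m)
    (K : Set (Finset (Fin m))) (hK : IsSimplicialComplex K)
    (hKne : Finset.univ ∉ K) :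
    m - 1 ≤ chrom (bier K) ∧ chrom (bier K) ≤ m := by
  classical
  -- the coloring with m colors
  have hmem : m ∈ {n : ℕ | ∃ c : (Fin m ⊕ Fin m) → ℕ,
      (∀ i, ({i} : Finset (Fin m ⊕ Fin m)) ∈ bier K → c i < n) ∧
      ∀ i j, i ≠ j → ({i, j} : Finset (Fin m ⊕ Fin m)) ∈ bier K → c i ≠ c j} := by
    refine ⟨Sum.elim (fun i => (i : ℕ)) (fun i => (i : ℕ)), ?_, ?_⟩
    · rintro (i | i) _ <;> exact i.isLt
    · rintro x y hxy ⟨I, J, hI, hJ, hd, hS⟩ hc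
      have hx : x ∈ I.map Function.Embedding.inl ∪ J.map Function.Embedding.inr := by
        rw [← hS]; simp
      have hy : y ∈ I.map Function.Embedding.inl ∪ J.map Function.Embedding.inr := by
        rw [← hS]; simp
      rcases x with i | i <;> rcases y with j | j <;>
        simp only [Sum.elim_inl, Sum.elim_inr] at hc
      · exact hxy (by rw [Fin.val_injective hc])
      · have hi : i ∈ I := by
          simp only [mem_union, mem_map] at hx
          rcases hx with ⟨a, ha, h⟩ | ⟨a, ha, h⟩
          · cases h; exact ha
          · cases h
        have hj : j ∈ J := by
          simp only [mem_union, mem_map] at hy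
          rcases hy with ⟨a, ha, h⟩ | ⟨a, ha, h⟩
          · cases h
          · cases h; exact ha
        have : i = j := Fin.val_injective hc
        subst this
        exact (Finset.disjoint_left.1 hd hi) hj
      · have hi : i ∈ J := by
          simp only [mem_union, mem_map] at hx
          rcases hx with ⟨a, ha, h⟩ | ⟨a, ha, h⟩
          · cases h
          · cases h; exact ha
        have hj : j ∈ I := by
          simp only [mem_union, mem_map] at hy
          rcases hy with ⟨a, ha, h⟩ | ⟨a, ha, h⟩
          · cases h; exact ha
          · cases h
        have : i = j := Fin.val_injective hc
        subst this
        exact (Finset.disjoint_left.1 hd hj) hi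
      · exact hxy (by rw [Fin.val_injective hc])
  constructor
  · -- lower bound: build a facet of size m-1
    obtain ⟨I, hI, hmax⟩ := Set.Finite.exists_maximalFor id K (Set.toFinite K) ⟨∅, hK.1⟩
    have hIne : I ≠ Finset.univ := fun h => hKne (h ▸ hI)
    obtain ⟨v, hv⟩ : ∃ v, v ∉ I := by
      by_contra h
      push_neg at h
      exact hIne (Finset.eq_univ_iff_forall.2 h)
    set J : Finset (Fin m) := Finset.univ \ insert v I with hJdef
    have hJ : J ∈ dualK K := by
      intro h
      have h1 : Finset.univ \ J = insert v I := by
        rw [hJdef, sdiff_sdiff_right_self, inf_eq_inter, univ_inter]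
      rw [h1] at h
      have h2 := hmax h (Finset.subset_insert v I)
      simp only [id] at h2
      exact hv (h2 (Finset.mem_insert_self v I))
    have hd : Disjoint I J := by
      rw [hJdef]
      exact Finset.disjoint_left.2 fun a ha hb =>
        (Finset.mem_sdiff.1 hb).2 (Finset.mem_insert_of_mem ha)
    set S : Finset (Fin m ⊕ Fin m) :=
      I.map Function.Embedding.inl ∪ J.map Function.Embedding.inr with hSdef
    have hSb : S ∈ bier K := ⟨I, J, hI, hJ, hd, rfl⟩
    have hScard : S.card = m - 1 := by
      rw [hSdef, Finset.card_union_of_disjoint]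
      · rw [Finset.card_map, Finset.card_map, hJdef, Finset.card_sdiff_of_subset (Finset.subset_univ _),
          Finset.card_univ, Fintype.card_fin, Finset.card_insert_of_notMem hv]
        have hle : I.card + 1 ≤ m := by
          have h3 := Finset.card_le_univ (insert v I)
          rw [Finset.card_insert_of_notMem hv] at h3
          simpa using h3
        omega
      · simp [Finset.disjoint_left]
    refine le_csInf ⟨m, hmem⟩ ?_
    rintro n ⟨c, hc1, hc2⟩
    have hinj : Set.InjOn c S := by
      intro x hx y hy hcxy
      by_contra hne
      refine hc2 x y hne (bier_down hK hSb ?_) hcxy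
      intro z hz
      simp only [Finset.mem_insert, Finset.mem_singleton] at hz
      rcases hz with rfl | rfl
      · exact hx
      · exact hy
    have hsub : S.image c ⊆ Finset.range n := by
      intro a ha
      obtain ⟨x, hx, rfl⟩ := Finset.mem_image.1 ha
      exact Finset.mem_range.2 (hc1 x (bier_down hK hSb (Finset.singleton_subset_iff.2 hx)))
    have := Finset.card_le_card hsub
    rw [Finset.card_image_of_injOn hinj, hScard, Finset.card_range] at this
    exact this
  · exact Nat.sInf_le hmem
end

section
/- For any simplicial complex K ≠ 2^[m] on [m] with m ≥ 2 and any prime p, there exists a mod p characteristic map Λ: V(Bier(K)) → (ℤ/p)^{m−1} such that the images of the vertices of each face of Bier(K) are linearly independent; namely, Λ(i) = Λ(i') = e_i for 1 ≤ i ≤ m−1 and Λ(m) = Λ(m') = e_1 + … + e_{m−1}. -/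
open Finset

lemma key_li {m : ℕ} (hm : 1 ≤ m) (p : ℕ) [Fact p.Prime] (T : Finset (Fin m))
    (hT : T ≠ Finset.univ) :
    LinearIndependent (ZMod p)
      (fun t : {x // x ∈ T} =>
        (if h : (t.1 : ℕ) < m - 1 then Pi.single (⟨(t.1 : ℕ), h⟩ : Fin (m-1)) (1 : ZMod p)
        else fun _ => 1 : Fin (m-1) → ZMod p)) := by
  classical
  rw [Fintype.linearIndependent_iff]
  intro g hg
  have hlastval : ¬ ((⟨m - 1, by omega⟩ : Fin m) : ℕ) < m - 1 := by simp
  set last : Fin m := ⟨m - 1, by omega⟩ with hlast_def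
  have hval : ∀ t : Fin m, t ≠ last → (t : ℕ) < m - 1 := by
    intro t ht
    have h2 := t.2
    by_contra h
    exact ht (Fin.ext (by simp [hlast_def]; omega))
  have hsum : ∀ j : Fin (m - 1),
      (∑ t : {x // x ∈ T}, g t *
        (if h : (t.1 : ℕ) < m - 1 then (Pi.single (⟨(t.1:ℕ), h⟩ : Fin (m-1)) (1 : ZMod p) : Fin (m-1) → ZMod p) j
         else (1 : ZMod p))) = 0 := by
    intro j
    have h := congrFun hg j
    simpa [Finset.sum_apply, dite_apply] using h
  have hglast : ∀ h : last ∈ T, g ⟨last, h⟩ = 0 := by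
    intro hL
    obtain ⟨k, hk⟩ : ∃ k, k ∉ T := by
      by_contra hc
      push_neg at hc
      exact hT (Finset.eq_univ_iff_forall.mpr hc)
    have hkne : k ≠ last := by rintro rfl; exact hk hL
    have hkval : (k : ℕ) < m - 1 := hval k hkne
    have h := hsum ⟨k, hkval⟩
    rw [Finset.sum_eq_single (⟨last, hL⟩ : {x // x ∈ T})] at h
    · simpa [hlastval] using h
    · rintro ⟨b, hb⟩ _ hne
      have hbne : b ≠ last := by
        intro hbl; exact hne (Subtype.ext hbl)
      have hbval := hval b hbne
      have hbk : b ≠ k := by rintro rfl; exact hk hb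
      rw [dif_pos hbval]
      have : (⟨(k:ℕ), hkval⟩ : Fin (m-1)) ≠ ⟨(b:ℕ), hbval⟩ := by
        simp only [ne_eq, Fin.mk.injEq]
        exact fun hh => hbk (Fin.ext hh.symm)
      rw [Pi.single_apply, if_neg this, mul_zero]
    · intro h'; exact absurd (Finset.mem_univ _) h'
  intro i
  rcases eq_or_ne i.1 last with hil | hil
  · obtain ⟨i, hi⟩ := i
    subst hil
    exact hglast hi
  · have hival := hval i.1 hil
    have h := hsum ⟨(i.1 : ℕ), hival⟩
    rw [Finset.sum_eq_single i] at h
    · rw [dif_pos hival, Pi.single_apply, if_pos rfl, mul_one] at h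
      exact h
    · rintro ⟨b, hb⟩ _ hne
      rcases eq_or_ne b last with hbl | hbl
      · subst hbl
        rw [hglast hb, zero_mul]
      · have hbval := hval b hbl
        have hbi : b ≠ i.1 := by
          intro hh; exact hne (Subtype.ext hh)
        rw [dif_pos hbval]
        have : (⟨(i.1:ℕ), hival⟩ : Fin (m-1)) ≠ ⟨(b:ℕ), hbval⟩ := by
          simp only [ne_eq, Fin.mk.injEq]
          exact fun hh => hbi (Fin.ext hh.symm)
        rw [Pi.single_apply, if_neg this, mul_zero]
    · intro h'; exact absurd (Finset.mem_univ _) h'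

/-- for every prime `p` there is a mod `p` characteristic map
`Λ : V(Bier(K)) → (ℤ/p)^{m-1}` (every face is mapped to a linearly independent
family), namely `Λ(i) = Λ(i') = e_i` for `1 ≤ i ≤ m-1` and
`Λ(m) = Λ(m') = e_1 + ⋯ + e_{m-1}`. -/
theorem bier_characteristic_map {m : ℕ} (hm : 2 ≤ m) (K : Set (Finset (Fin m)))
    (hK : IsSimplicialComplex K) (hKne : Finset.univ ∉ K)
    (p : ℕ) (hp : p.Prime) :
    ∃ Λ : (Fin m ⊕ Fin m) → (Fin (m - 1) → ZMod p),
      (∀ S ∈ bier K,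
        LinearIndependent (ZMod p) (fun v : {x // x ∈ S} => Λ v.1)) ∧
      (∀ i : Fin m, Λ (Sum.inl i) = Λ (Sum.inr i)) ∧
      (∀ (i : Fin m) (h : (i : ℕ) < m - 1),
        Λ (Sum.inl i) = Pi.single (⟨(i : ℕ), h⟩ : Fin (m - 1)) 1) ∧
      (∀ i : Fin m, (i : ℕ) = m - 1 → Λ (Sum.inl i) = fun _ => 1) := by
  classical
  haveI : Fact p.Prime := ⟨hp⟩
  refine ⟨fun v => (if h : ((Sum.elim id id v : Fin m) : ℕ) < m - 1 then
      Pi.single (⟨((Sum.elim id id v : Fin m) : ℕ), h⟩ : Fin (m-1)) (1 : ZMod p)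
      else fun _ => 1 : Fin (m-1) → ZMod p), ?_, fun i => rfl, ?_, ?_⟩
  · rintro S ⟨I, J, hI, hJ, hdisj, rfl⟩
    have hTne : I ∪ J ≠ Finset.univ := by
      intro h
      apply hJ
      have hsub : Finset.univ \ J ⊆ I := by
        intro x hx
        simp only [Finset.mem_sdiff] at hx
        have hx2 : x ∈ I ∪ J := h ▸ Finset.mem_univ x
        rcases Finset.mem_union.mp hx2 with h1 | h2
        · exact h1
        · exact absurd h2 hx.2
      exact hK.2 I hI _ hsub
    have hmem : ∀ v : {x // x ∈ I.map Function.Embedding.inl ∪ J.map Function.Embedding.inr},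
        (Sum.elim id id v.1 : Fin m) ∈ I ∪ J := by
      rintro ⟨v, hv⟩
      rcases Finset.mem_union.mp hv with h | h
      · obtain ⟨a, ha, rfl⟩ := Finset.mem_map.mp h
        exact Finset.mem_union_left _ ha
      · obtain ⟨a, ha, rfl⟩ := Finset.mem_map.mp h
        exact Finset.mem_union_right _ ha
    let e : {x // x ∈ I.map Function.Embedding.inl ∪ J.map Function.Embedding.inr} →
        {x // x ∈ I ∪ J} := fun v => ⟨Sum.elim id id v.1, hmem v⟩
    have hinl : ∀ a, Sum.inl a ∈ I.map Function.Embedding.inl ∪ J.map Function.Embedding.inr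
        → a ∈ I := by
      intro a ha
      rcases Finset.mem_union.mp ha with h | h
      · obtain ⟨b, hb, hba⟩ := Finset.mem_map.mp h
        cases hba; exact hb
      · obtain ⟨b, hb, hba⟩ := Finset.mem_map.mp h
        simp [Function.Embedding.inr] at hba
    have hinr : ∀ a, Sum.inr a ∈ I.map Function.Embedding.inl ∪ J.map Function.Embedding.inr
        → a ∈ J := by
      intro a ha
      rcases Finset.mem_union.mp ha with h | h
      · obtain ⟨b, hb, hba⟩ := Finset.mem_map.mp h
        simp [Function.Embedding.inl] at hba
      · obtain ⟨b, hb, hba⟩ := Finset.mem_map.mp h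
        cases hba; exact hb
    have he : Function.Injective e := by
      rintro ⟨x, hx⟩ ⟨y, hy⟩ hxy
      simp only [e, Subtype.mk.injEq] at hxy ⊢
      match x, y with
      | Sum.inl a, Sum.inl b => simp only [Sum.elim_inl, id] at hxy; exact congrArg _ hxy
      | Sum.inr a, Sum.inr b => simp only [Sum.elim_inr, id] at hxy; exact congrArg _ hxy
      | Sum.inl a, Sum.inr b =>
        exfalso
        simp only [Sum.elim_inl, Sum.elim_inr, id] at hxy
        subst hxy
        exact Finset.disjoint_left.mp hdisj (hinl a hx) (hinr a hy)
      | Sum.inr a, Sum.inl b =>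
        exfalso
        simp only [Sum.elim_inl, Sum.elim_inr, id] at hxy
        subst hxy
        exact Finset.disjoint_left.mp hdisj (hinl a hy) (hinr a hx)
    exact (key_li (by omega) p (I ∪ J) hTne).comp e he
  · intro i h
    simp only [Sum.elim_inl, id]
    exact dif_pos h
  · intro i h
    simp only [Sum.elim_inl, id]
    exact dif_neg (by omega)
end

section
/- For any simplicial complex K ≠ 2^[m] on [m] with m ≥ 2 and any prime p, the mod p Buchstaber number of Bier(K) equals f₀(K) − f_{m−2}(K) + 1. -/
open Finset

/-- The number of geometric vertices of a simplicial complex. -/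
noncomputable def numVerts {α : Type*} (L : Set (Finset α)) : ℕ :=
  {v : α | ({v} : Finset α) ∈ L}.ncard

/-- The mod `p` Buchstaber number of `L`: the maximal `r` such that there is a
mod `p` characteristic map `Λ : V(L) → (ℤ/p)^{f₀(L) - r}`, i.e. a map sending
the vertex set of every face of `L` to a linearly independent family. -/
noncomputable def buchstaberMod (p : ℕ) {α : Type*} (L : Set (Finset α)) : ℕ :=
  sSup {r : ℕ | ∃ Λ : α → (Fin (numVerts L - r) → ZMod p),
    ∀ S ∈ L, LinearIndependent (ZMod p) (fun v : {x // x ∈ S} => Λ v.1)}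

def avec (n p : ℕ) (x : Fin (n+1)) : Fin n → ZMod p :=
  fun j => (if x = Fin.castSucc j then 1 else 0) + (if x = Fin.last n then 1 else 0)

lemma avec_li {n p : ℕ} {ι : Type*} [Fintype ι] (g : ι → Fin (n+1))
    (hg : Function.Injective g) (k : Fin (n+1)) (hk : ∀ i, g i ≠ k) :
    LinearIndependent (ZMod p) (fun i => avec n p (g i)) := by
  classical
  rw [Fintype.linearIndependent_iff]
  intro c hc
  have hcj : ∀ j : Fin n,
      (∑ i, if g i = Fin.castSucc j then c i else 0)
        + (∑ i, if g i = Fin.last n then c i else 0) = 0 := by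
    intro j
    have h0 := congrFun hc j
    simp only [Finset.sum_apply, Pi.smul_apply, Pi.zero_apply, avec, smul_eq_mul,
      mul_add, mul_ite, mul_one, mul_zero] at h0
    rw [Finset.sum_add_distrib] at h0
    exact h0
  have hit : ∀ i₀ : ι, (∑ i, if g i = g i₀ then c i else 0) = c i₀ := by
    intro i₀
    have he : ∀ i : ι, (if g i = g i₀ then c i else 0) = if i = i₀ then c i else 0 := by
      intro i
      by_cases h : i = i₀
      · subst h; simp
      · rw [if_neg (fun hh => h (hg hh)), if_neg h]
    rw [Finset.sum_congr rfl fun i _ => he i]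
    simp [Finset.sum_ite_eq']
  have miss : ∀ t, (∀ i, g i ≠ t) → (∑ i, if g i = t then c i else 0) = 0 := by
    intro t ht
    exact Finset.sum_eq_zero fun i _ => if_neg (ht i)
  have hSl : (∑ i, if g i = Fin.last n then c i else 0) = 0 := by
    by_cases hl : ∃ i, g i = Fin.last n
    · obtain ⟨il, hil⟩ := hl
      have hkl : k ≠ Fin.last n := fun h => hk il (h ▸ hil)
      have hkv : (k : ℕ) < n := Fin.val_lt_last hkl
      have h1 : (∑ i, if g i = Fin.castSucc (⟨(k : ℕ), hkv⟩ : Fin n) then c i else 0) = 0 := by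
        refine miss _ fun i hgi => hk i ?_
        rw [hgi]; exact Fin.ext rfl
      have h2 := hcj ⟨(k : ℕ), hkv⟩
      rw [h1, zero_add] at h2
      exact h2
    · push_neg at hl
      exact miss _ hl
  intro i₀
  by_cases h : g i₀ = Fin.last n
  · have h1 := hit i₀
    rw [h] at h1
    exact h1.symm.trans hSl
  · have hv : (g i₀ : ℕ) < n := Fin.val_lt_last h
    have hcast : Fin.castSucc (⟨(g i₀ : ℕ), hv⟩ : Fin n) = g i₀ := Fin.ext rfl
    have h1 := hcj ⟨(g i₀ : ℕ), hv⟩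
    rw [hSl, add_zero, hcast, hit i₀] at h1
    exact h1

/-- Vertices of the Bier sphere. -/
lemma bier_verts {m : ℕ} (K : Set (Finset (Fin m))) (hK : IsSimplicialComplex K)
    (hKne : Finset.univ ∉ K) :
    {v : Fin m ⊕ Fin m | ({v} : Finset (Fin m ⊕ Fin m)) ∈ bier K}
      = Sum.inl '' {i | ({i} : Finset (Fin m)) ∈ K}
        ∪ Sum.inr '' {i | (Finset.univ \ {i} : Finset (Fin m)) ∉ K} := by
  ext v
  constructor
  · rintro ⟨I, J, hI, hJ, -, hS⟩
    cases v with
    | inl i =>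
      left
      refine ⟨i, ?_, rfl⟩
      have hJe : J = ∅ := by
        rw [Finset.eq_empty_iff_forall_notMem]
        intro j hj
        have : Sum.inr j ∈ ({Sum.inl i} : Finset (Fin m ⊕ Fin m)) := by
          rw [hS]
          exact Finset.mem_union_right _ (Finset.mem_map_of_mem _ hj)
        simp at this
      have hIe : I = {i} := by
        ext i'
        constructor
        · intro hi'
          have : Sum.inl i' ∈ ({Sum.inl i} : Finset (Fin m ⊕ Fin m)) := by
            rw [hS]; exact Finset.mem_union_left _ (Finset.mem_map_of_mem _ hi')
          simp at this
          simp [this]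
        · intro hi'
          rw [Finset.mem_singleton] at hi'
          subst hi'
          have : Sum.inl i' ∈ I.map Function.Embedding.inl ∪ J.map Function.Embedding.inr := by
            rw [← hS]; simp
          rcases Finset.mem_union.1 this with h | h
          · simpa using h
          · simp at h
      rwa [hIe] at hI
    | inr i =>
      right
      refine ⟨i, ?_, rfl⟩
      have hJe : J = {i} := by
        ext i'
        constructor
        · intro hi'
          have : Sum.inr i' ∈ ({Sum.inr i} : Finset (Fin m ⊕ Fin m)) := by
            rw [hS]; exact Finset.mem_union_right _ (Finset.mem_map_of_mem _ hi')
          simp at this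
          simp [this]
        · intro hi'
          rw [Finset.mem_singleton] at hi'
          subst hi'
          have : Sum.inr i' ∈ I.map Function.Embedding.inl ∪ J.map Function.Embedding.inr := by
            rw [← hS]; simp
          rcases Finset.mem_union.1 this with h | h
          · simp at h
          · simpa using h
      rw [hJe] at hJ
      exact hJ
  · rintro (⟨i, hi, rfl⟩ | ⟨i, hi, rfl⟩)
    · exact ⟨{i}, ∅, hi, by simpa [dualK] using hKne, by simp, by simp⟩
    · exact ⟨∅, {i}, hK.1, hi, by simp, by simp⟩

/-- `numVerts (bier K) = f₀(K) + m - #C` where `C = {i | univ \ {i} ∈ K}`. -/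
lemma numVerts_bier {m : ℕ} (K : Set (Finset (Fin m))) (hK : IsSimplicialComplex K)
    (hKne : Finset.univ ∉ K) :
    numVerts (bier K) = {i : Fin m | ({i} : Finset (Fin m)) ∈ K}.ncard
      + (m - {i : Fin m | (Finset.univ \ {i} : Finset (Fin m)) ∈ K}.ncard) := by
  classical
  rw [numVerts, bier_verts K hK hKne]
  rw [Set.ncard_union_eq ?_ (Set.toFinite _) (Set.toFinite _)]
  · rw [Set.ncard_image_of_injective _ Sum.inl_injective,
      Set.ncard_image_of_injective _ Sum.inr_injective]
    congr 1
    have : {i : Fin m | (Finset.univ \ {i} : Finset (Fin m)) ∉ K}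
        = {i : Fin m | (Finset.univ \ {i} : Finset (Fin m)) ∈ K}ᶜ := rfl
    rw [this]
    have h := Set.ncard_add_ncard_compl
      {i : Fin m | (Finset.univ \ {i} : Finset (Fin m)) ∈ K}
    rw [Nat.card_eq_fintype_card, Fintype.card_fin] at h
    omega
  · rw [Set.disjoint_iff_forall_ne]
    rintro x ⟨i, -, rfl⟩ y ⟨j, -, rfl⟩
    simp

/-- `#C` equals the number of `(m-2)`-faces of `K`. -/
lemma card_C_eq {m : ℕ} (hm : 1 ≤ m) (K : Set (Finset (Fin m))) :
    {i : Fin m | (Finset.univ \ {i} : Finset (Fin m)) ∈ K}.ncard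
      = {σ : Finset (Fin m) | σ ∈ K ∧ σ.card = m - 1}.ncard := by
  classical
  have himg : {σ : Finset (Fin m) | σ ∈ K ∧ σ.card = m - 1}
      = (fun i : Fin m => (Finset.univ \ {i} : Finset (Fin m)))
          '' {i : Fin m | (Finset.univ \ {i} : Finset (Fin m)) ∈ K} := by
    ext σ
    constructor
    · rintro ⟨hσ, hcard⟩
      have hc1 : (Finset.univ \ σ).card = 1 := by
        rw [Finset.card_sdiff_of_subset (Finset.subset_univ σ), Finset.card_univ, Fintype.card_fin]
        omega
      obtain ⟨i, hi⟩ := Finset.card_eq_one.1 hc1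
      have hσeq : σ = Finset.univ \ {i} := by
        rw [← hi, Finset.sdiff_sdiff_self_left, Finset.univ_inter]
      exact ⟨i, show Finset.univ \ {i} ∈ K by rw [← hσeq]; exact hσ, hσeq.symm⟩
    · rintro ⟨i, hi, rfl⟩
      refine ⟨hi, ?_⟩
      rw [Finset.card_sdiff_of_subset (Finset.subset_univ _), Finset.card_univ, Fintype.card_fin,
        Finset.card_singleton]
  rw [himg, Set.ncard_image_of_injective]
  intro i j hij
  simp only at hij
  have : (Finset.univ \ (Finset.univ \ ({i} : Finset (Fin m))))
      = Finset.univ \ (Finset.univ \ ({j} : Finset (Fin m))) := by rw [hij]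
  simp only [Finset.sdiff_sdiff_self_left, Finset.univ_inter] at this
  exact Finset.singleton_injective this

/-- `f_{m-2} ≤ f₀`. -/
lemma card_C_le {m : ℕ} (hm : 2 ≤ m) (K : Set (Finset (Fin m)))
    (hK : IsSimplicialComplex K) :
    {i : Fin m | (Finset.univ \ {i} : Finset (Fin m)) ∈ K}.ncard
      ≤ {i : Fin m | ({i} : Finset (Fin m)) ∈ K}.ncard := by
  classical
  set C := {i : Fin m | (Finset.univ \ {i} : Finset (Fin m)) ∈ K} with hC
  set A := {i : Fin m | ({i} : Finset (Fin m)) ∈ K} with hA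
  rcases Set.eq_empty_or_nonempty C with h | ⟨i₀, hi₀⟩
  · simp [h]
  have hmem : ∀ i₁ ∈ C, ∀ j : Fin m, j ≠ i₁ → j ∈ A := by
    intro i₁ hi₁ j hj
    refine hK.2 _ hi₁ {j} ?_
    intro x hx
    rw [Finset.mem_singleton] at hx
    subst hx
    simp [hj]
  by_cases h1 : C ⊆ {i₀}
  · have hCle : C.ncard ≤ 1 := by
      calc C.ncard ≤ ({i₀} : Set (Fin m)).ncard := Set.ncard_le_ncard h1 (Set.toFinite _)
        _ = 1 := Set.ncard_singleton i₀
    have hAsub : ({i₀}ᶜ : Set (Fin m)) ⊆ A := fun j hj => hmem i₀ hi₀ j hj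
    have hAge : m - 1 ≤ A.ncard := by
      have := Set.ncard_le_ncard hAsub (Set.toFinite _)
      have h2 := Set.ncard_add_ncard_compl ({i₀} : Set (Fin m))
      rw [Nat.card_eq_fintype_card, Fintype.card_fin, Set.ncard_singleton] at h2
      omega
    omega
  · obtain ⟨i₁, hi₁, hne⟩ : ∃ i₁ ∈ C, i₁ ≠ i₀ := by
      rcases Set.not_subset.1 h1 with ⟨i₁, hi₁, hni⟩
      exact ⟨i₁, hi₁, fun h => hni (by simp [h])⟩
    have hAuniv : A = Set.univ := by
      ext j
      simp only [Set.mem_univ, iff_true]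
      by_cases hj : j = i₀
      · subst hj; exact hmem i₁ hi₁ j hne.symm
      · exact hmem i₀ hi₀ j hj
    have : C.ncard ≤ (Set.univ : Set (Fin m)).ncard :=
      Set.ncard_le_ncard (Set.subset_univ C) (Set.toFinite _)
    rw [← hAuniv] at this
    exact this

/-- The Bier sphere has a face with `m - 1` vertices. -/
lemma bier_facet {m : ℕ} (K : Set (Finset (Fin m))) (hK : IsSimplicialComplex K)
    (hKne : Finset.univ ∉ K) :
    ∃ S ∈ bier K, S.card = m - 1 := by
  classical
  obtain ⟨I, hI, hImax⟩ := Set.exists_max_image K (fun σ => σ.card) (Set.toFinite K) ⟨∅, hK.1⟩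
  have hIne : I ≠ Finset.univ := fun h => hKne (h ▸ hI)
  obtain ⟨j, -, hj⟩ := Finset.not_subset.1 (fun h => hIne (Finset.univ_subset_iff.1 h))
  have hins : insert j I ∉ K := by
    intro h
    have := hImax _ h
    rw [Finset.card_insert_of_notMem hj] at this
    omega
  set J := Finset.univ \ insert j I with hJdef
  have hJ : J ∈ dualK K := by
    have : Finset.univ \ J = insert j I := by
      rw [hJdef, Finset.sdiff_sdiff_self_left, Finset.univ_inter]
    rw [dualK, Set.mem_setOf_eq, this]
    exact hins
  have hdisj : Disjoint I J := by
    refine Finset.disjoint_left.2 fun x hx hxJ => ?_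
    rw [hJdef, Finset.mem_sdiff] at hxJ
    exact hxJ.2 (Finset.mem_insert_of_mem hx)
  refine ⟨I.map Function.Embedding.inl ∪ J.map Function.Embedding.inr,
    ⟨I, J, hI, hJ, hdisj, rfl⟩, ?_⟩
  have hdisj2 : Disjoint (I.map (Function.Embedding.inl : Fin m ↪ Fin m ⊕ Fin m))
      (J.map Function.Embedding.inr) := by
    refine Finset.disjoint_left.2 fun x hx hx' => ?_
    simp only [Finset.mem_map, Function.Embedding.inl_apply] at hx
    simp only [Finset.mem_map, Function.Embedding.inr_apply] at hx'
    obtain ⟨a, -, rfl⟩ := hx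
    obtain ⟨b, -, hb⟩ := hx'
    exact Sum.inl_ne_inr hb.symm
  rw [Finset.card_union_of_disjoint hdisj2, Finset.card_map, Finset.card_map]
  have hJcard : J.card = m - (I.card + 1) := by
    rw [hJdef, Finset.card_sdiff_of_subset (Finset.subset_univ _), Finset.card_univ, Fintype.card_fin,
      Finset.card_insert_of_notMem hj]
  have hIcard : I.card + 1 ≤ m := by
    have := Finset.card_le_card (Finset.subset_univ (insert j I))
    rwa [Finset.card_insert_of_notMem hj, Finset.card_univ, Fintype.card_fin] at this
  omega

/-- Faces of the Bier sphere avoid some vertex of `[m]`: `I ∪ J ≠ univ`. -/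
lemma bier_face_ne_univ {m : ℕ} {K : Set (Finset (Fin m))} {I J : Finset (Fin m)}
    (hI : I ∈ K) (hJ : J ∈ dualK K) (hK : IsSimplicialComplex K) :
    I ∪ J ≠ Finset.univ := by
  intro h
  apply hJ
  refine hK.2 I hI _ ?_
  intro x hx
  rw [Finset.mem_sdiff] at hx
  have : x ∈ I ∪ J := h ▸ Finset.mem_univ x
  rcases Finset.mem_union.1 this with h' | h'
  · exact h'
  · exact absurd h' hx.2

/-- for every prime `p`,
`s_p(Bier(K)) = f₀(K) - f_{m-2}(K) + 1`. -/
theorem buchstaber_bier {m : ℕ} (hm : 2 ≤ m) (K : Set (Finset (Fin m)))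
    (hK : IsSimplicialComplex K) (hKne : Finset.univ ∉ K)
    (p : ℕ) (hp : p.Prime) :
    buchstaberMod p (bier K) =
      {i : Fin m | ({i} : Finset (Fin m)) ∈ K}.ncard -
        {σ : Finset (Fin m) | σ ∈ K ∧ σ.card = m - 1}.ncard + 1 := by
  classical
  haveI := Fact.mk hp
  obtain ⟨n, rfl⟩ : ∃ n, m = n + 1 := ⟨m - 1, by omega⟩
  have hn : 1 ≤ n := by omega
  set A := {i : Fin (n+1) | ({i} : Finset (Fin (n+1))) ∈ K} with hA
  set C := {i : Fin (n+1) | (Finset.univ \ {i} : Finset (Fin (n+1))) ∈ K} with hC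
  have hCA : C.ncard ≤ A.ncard := card_C_le hm K hK
  have hCm : C.ncard ≤ n + 1 := by
    have := Set.ncard_le_ncard (Set.subset_univ C) (Set.toFinite _)
    rwa [Set.ncard_univ, Nat.card_eq_fintype_card, Fintype.card_fin] at this
  have hnv : numVerts (bier K) = A.ncard + (n + 1 - C.ncard) :=
    numVerts_bier K hK hKne
  have hCf : C.ncard = {σ : Finset (Fin (n+1)) | σ ∈ K ∧ σ.card = n + 1 - 1}.ncard :=
    card_C_eq (by omega) K
  rw [buchstaberMod, ← hCf]
  -- the candidate maximum
  set r₀ := A.ncard - C.ncard + 1 with hr₀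
  have hub : ∀ r ∈ {r : ℕ | ∃ Λ : Fin (n+1) ⊕ Fin (n+1) →
      (Fin (numVerts (bier K) - r) → ZMod p),
      ∀ S ∈ bier K, LinearIndependent (ZMod p) (fun v : {x // x ∈ S} => Λ v.1)},
      r ≤ r₀ := by
    rintro r ⟨Λ, hΛ⟩
    obtain ⟨S, hS, hcard⟩ := bier_facet K hK hKne
    have hli := hΛ S hS
    have hle := hli.fintype_card_le_finrank
    rw [Fintype.card_coe, hcard, Module.finrank_fin_fun] at hle
    omega
  have hmem : r₀ ∈ {r : ℕ | ∃ Λ : Fin (n+1) ⊕ Fin (n+1) →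
      (Fin (numVerts (bier K) - r) → ZMod p),
      ∀ S ∈ bier K, LinearIndependent (ZMod p) (fun v : {x // x ∈ S} => Λ v.1)} := by
    have hdim : numVerts (bier K) - r₀ = n := by omega
    rw [Set.mem_setOf_eq, hdim]
    refine ⟨Sum.elim (avec n p) (avec n p), ?_⟩
    rintro S ⟨I, J, hI, hJ, hdisj, rfl⟩
    obtain ⟨k, -, hk⟩ := Finset.not_subset.1
      (fun h => (bier_face_ne_univ hI hJ hK) (Finset.univ_subset_iff.1 h))
    set T := I.map (Function.Embedding.inl : Fin (n+1) ↪ Fin (n+1) ⊕ Fin (n+1))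
      ∪ J.map Function.Embedding.inr with hT
    set g : {x // x ∈ T} → Fin (n+1) := fun v => Sum.elim id id v.1 with hgdef
    have hmemIJ : ∀ v : {x // x ∈ T}, g v ∈ I ∪ J := by
      rintro ⟨x, hx⟩
      rcases Finset.mem_union.1 hx with h | h
      · simp only [Finset.mem_map, Function.Embedding.inl_apply] at h
        obtain ⟨a, ha, rfl⟩ := h
        exact Finset.mem_union_left _ ha
      · simp only [Finset.mem_map, Function.Embedding.inr_apply] at h
        obtain ⟨a, ha, rfl⟩ := h
        exact Finset.mem_union_right _ ha
    have hg : Function.Injective g := by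
      rintro ⟨x, hx⟩ ⟨y, hy⟩ hxy
      apply Subtype.ext
      rcases Finset.mem_union.1 hx with h | h <;>
        rcases Finset.mem_union.1 hy with h' | h' <;>
        simp only [Finset.mem_map, Function.Embedding.inl_apply,
          Function.Embedding.inr_apply] at h h' <;>
        obtain ⟨a, ha, rfl⟩ := h <;> obtain ⟨b, hb, rfl⟩ := h' <;>
        simp only [hgdef, Sum.elim_inl, Sum.elim_inr, id_eq] at hxy
      · subst hxy; rfl
      · exact absurd (Finset.disjoint_left.1 hdisj (hxy ▸ ha) hb) (fun h => h)
      · exact absurd (Finset.disjoint_left.1 hdisj (hxy ▸ hb) ha) (fun h => h)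
      · subst hxy; rfl
    have hkne : ∀ v, g v ≠ k := fun v h => hk (h ▸ hmemIJ v)
    have hfam : (fun v : {x // x ∈ T} => Sum.elim (avec n p) (avec n p) v.1)
        = fun v => avec n p (g v) := by
      funext v
      obtain ⟨x | x, hx⟩ := v <;> rfl
    rw [show (fun v : {x // x ∈ T} => Sum.elim (avec n p) (avec n p) v.1)
        = fun v => avec n p (g v) from hfam]
    exact avec_li g hg k hkne
  exact le_antisymm (csSup_le ⟨r₀, hmem⟩ hub) (le_csSup ⟨r₀, hub⟩ hmem)
end

section
/- Let P be a stacked simplicial polytope boundary, i.e., a simplicial complex obtained from the boundary of an n-simplex (n ≥ 3) by a finite sequence of stellar subdivisions of facets. Then the 1-skeleton of P is a chordal graph. -/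
open Finset

/-- The 1-skeleton graph of a simplicial complex. -/
def skeletonGraph {α : Type*} [DecidableEq α] (L : Set (Finset α)) :
    SimpleGraph α where
  Adj i j := i ≠ j ∧ ({i, j} : Finset α) ∈ L
  symm := ⟨fun i j h => ⟨h.1.symm, by rw [Finset.pair_comm]; exact h.2⟩⟩
  loopless := ⟨fun i h => h.1 rfl⟩

/-- A simplicial complex is chordal if its 1-skeleton contains no induced
(chordless) cycle of length at least `4`. -/
def ChordalComplex {α : Type*} [DecidableEq α] (L : Set (Finset α)) : Prop :=
  ∀ n : ℕ, 4 ≤ n → ∀ f : ZMod n → α, Function.Injective f →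
    ¬ (∀ i j : ZMod n,
        (skeletonGraph L).Adj (f i) (f j) ↔ (j = i + 1 ∨ i = j + 1))

/-- One stellar subdivision of a facet: `L'` is obtained from `L` by choosing a
nonempty facet `σ` (a maximal face) and a new vertex `v`, removing `σ` and
adding the faces `{v} ∪ τ` for all proper subsets `τ ⊊ σ`. -/
def StellarStep {α : Type*} [DecidableEq α] (L L' : Set (Finset α)) : Prop :=
  ∃ (σ : Finset α) (v : α), σ ∈ L ∧ σ ≠ ∅ ∧ (∀ τ ∈ L, σ ⊆ τ → τ = σ) ∧
    ({v} : Finset α) ∉ L ∧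
    L' = (L \ {σ}) ∪ {s | ∃ τ : Finset α, τ ⊆ σ ∧ τ ≠ σ ∧ s = insert v τ}

/-!
Stellar subdivision of a facet `σ` adds a vertex `v` whose neighbours are exactly the vertices
of `σ`, which form a clique, and leaves the edges between the old vertices unchanged (edges have
two elements while `σ` has `n ≥ 3`). A vertex with a clique neighbourhood lies on no induced
cycle of length `≥ 4`, since its two cycle-neighbours would be joined by a chord. Hence an induced
cycle of the subdivided complex avoids `v` and is already one of the old complex; the boundary of
the simplex is chordal because its 1-skeleton is a complete graph on `W`.
-/

lemma ZMod.natCast_ne_zero_of_pos_of_lt {k m : ℕ} (hk : 0 < k) (hkm : k < m) :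
    (k : ZMod m) ≠ 0 := by
  rw [Ne, ZMod.natCast_eq_zero_iff]
  exact fun h => absurd (Nat.le_of_dvd hk h) (by omega)

namespace SimpleGraph

variable {α : Type*}

def IsInducedCycle (G : SimpleGraph α) {m : ℕ} (f : ZMod m → α) : Prop :=
  Function.Injective f ∧ ∀ i j, G.Adj (f i) (f j) ↔ (j = i + 1 ∨ i = j + 1)

def IsChordal (G : SimpleGraph α) : Prop :=
  ∀ m, 4 ≤ m → ∀ f : ZMod m → α, ¬ G.IsInducedCycle f

lemma IsInducedCycle.apply_ne_of_isClique_neighborSet {G : SimpleGraph α} {m : ℕ}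
    {f : ZMod m → α} (hf : G.IsInducedCycle f) (hm : 4 ≤ m) {v : α}
    (hv : G.IsClique (G.neighborSet v)) (i : ZMod m) : f i ≠ v := by
  rintro rfl
  have h1 := ZMod.natCast_ne_zero_of_pos_of_lt (m := m) (k := 1) (by omega) (by omega)
  have h2 := ZMod.natCast_ne_zero_of_pos_of_lt (m := m) (k := 2) (by omega) (by omega)
  have h3 := ZMod.natCast_ne_zero_of_pos_of_lt (m := m) (k := 3) (by omega) (by omega)
  push_cast at h1 h2 h3
  have hprev : G.Adj (f i) (f (i - 1)) := (hf.2 _ _).2 (Or.inr (sub_add_cancel i 1).symm)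
  have hnext : G.Adj (f i) (f (i + 1)) := (hf.2 _ _).2 (Or.inl rfl)
  have hne : f (i - 1) ≠ f (i + 1) :=
    hf.1.ne fun h => h2 (by linear_combination -h)
  rcases (hf.2 _ _).1 (hv hprev hnext hne) with h | h
  · exact h1 (by linear_combination h)
  · exact h3 (by linear_combination -h)

lemma isChordal_of_forall_isClique_neighborSet {G : SimpleGraph α}
    (hG : ∀ v, G.IsClique (G.neighborSet v)) : G.IsChordal :=
  fun _ hm f hf => hf.apply_ne_of_isClique_neighborSet hm (hG (f 0)) 0 rfl

lemma IsChordal.of_isClique_neighborSet {G G' : SimpleGraph α} (hG : G.IsChordal) {v : α}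
    (hagree : ∀ x y, x ≠ v → y ≠ v → (G'.Adj x y ↔ G.Adj x y))
    (hv : G'.IsClique (G'.neighborSet v)) : G'.IsChordal := by
  intro m hm f hf
  have hfv := hf.apply_ne_of_isClique_neighborSet hm hv
  exact hG m hm f ⟨hf.1, fun i j => (hagree _ _ (hfv i) (hfv j)).symm.trans (hf.2 i j)⟩

end SimpleGraph

open SimpleGraph

section Complex

variable {α : Type*}

lemma IsSimplicialComplex.notMem_of_singleton_notMem {L : Set (Finset α)}
    (hL : IsSimplicialComplex L) {v : α} (hv : {v} ∉ L) {s : Finset α} (hs : s ∈ L) :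
    v ∉ s :=
  fun hvs => hv (hL.2 s hs {v} (singleton_subset_iff.mpr hvs))

def IsPureOfCard (n : ℕ) (L : Set (Finset α)) : Prop :=
  ∀ τ ∈ L, ∃ ρ ∈ L, τ ⊆ ρ ∧ ρ.card = n

def simplexBoundary (W : Finset α) : Set (Finset α) := {σ | σ ⊆ W ∧ σ ≠ W}

lemma isSimplicialComplex_simplexBoundary {W : Finset α} (hW : W.Nonempty) :
    IsSimplicialComplex (simplexBoundary W) := by
  refine ⟨⟨empty_subset W, hW.ne_empty.symm⟩, ?_⟩
  rintro s ⟨hsW, hsne⟩ t hts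
  exact ⟨hts.trans hsW, fun h => hsne (hsW.antisymm (h ▸ hts))⟩

variable [DecidableEq α]

lemma chordalComplex_iff_isChordal (L : Set (Finset α)) :
    ChordalComplex L ↔ (skeletonGraph L).IsChordal := by
  simp only [ChordalComplex, IsChordal, IsInducedCycle, not_and]

lemma pair_ne_of_three_le_card {σ : Finset α} (hσ : 3 ≤ σ.card) (x y : α) :
    ({x, y} : Finset α) ≠ σ := by
  rintro rfl
  have := card_le_two (a := x) (b := y)
  omega

def stellarSubdivision (L : Set (Finset α)) (σ : Finset α) (v : α) : Set (Finset α) :=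
  (L \ {σ}) ∪ {s | ∃ τ : Finset α, τ ⊆ σ ∧ τ ≠ σ ∧ s = insert v τ}

lemma stellarStep_iff {L L' : Set (Finset α)} :
    StellarStep L L' ↔ ∃ (σ : Finset α) (v : α), σ ∈ L ∧ σ ≠ ∅ ∧
      (∀ τ ∈ L, σ ⊆ τ → τ = σ) ∧ ({v} : Finset α) ∉ L ∧ L' = stellarSubdivision L σ v :=
  Iff.rfl

lemma mem_stellarSubdivision {L : Set (Finset α)} {σ : Finset α} {v : α} {s : Finset α} :
    s ∈ stellarSubdivision L σ v ↔ (s ∈ L ∧ s ≠ σ) ∨ ∃ τ ⊂ σ, s = insert v τ := by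
  simp only [stellarSubdivision, Set.mem_union, Set.mem_sdiff, Set.mem_singleton_iff,
    Set.mem_ofPred_eq, Finset.ssubset_iff_subset_ne, and_assoc]

lemma isPureOfCard_simplexBoundary {n : ℕ} {W : Finset α} (hW : W.card = n + 1) :
    IsPureOfCard n (simplexBoundary W) := by
  rintro s ⟨hsW, hsne⟩
  obtain ⟨a, haW, hsa⟩ := ssubset_iff_exists_subset_erase.mp (hsW.ssubset_of_ne hsne)
  refine ⟨W.erase a, ⟨erase_subset a W, (erase_ssubset haW).ne⟩, hsa, ?_⟩
  rw [card_erase_of_mem haW, hW, Nat.add_sub_cancel]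

lemma isClique_neighborSet_simplexBoundary {W : Finset α} (hW : 3 ≤ W.card) (v : α) :
    (skeletonGraph (simplexBoundary W)).IsClique
      ((skeletonGraph (simplexBoundary W)).neighborSet v) := by
  have hmemW : ∀ {x y}, (skeletonGraph (simplexBoundary W)).Adj x y → y ∈ W :=
    fun h => h.2.1 (by simp)
  intro x hx y hy hxy
  exact ⟨hxy, insert_subset (hmemW hx) (singleton_subset_iff.mpr (hmemW hy)),
    pair_ne_of_three_le_card hW x y⟩

section StellarSubdivision

variable {L : Set (Finset α)} {σ : Finset α} {v : α}

lemma isSimplicialComplex_stellarSubdivision (hL : IsSimplicialComplex L) (hσL : σ ∈ L)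
    (hσ : σ ≠ ∅) (hmax : ∀ τ ∈ L, σ ⊆ τ → τ = σ) :
    IsSimplicialComplex (stellarSubdivision L σ v) := by
  refine ⟨mem_stellarSubdivision.mpr (Or.inl ⟨hL.1, hσ.symm⟩), ?_⟩
  intro s hs t hts
  rw [mem_stellarSubdivision] at hs ⊢
  rcases hs with ⟨hsL, hsσ⟩ | ⟨τ, hτσ, rfl⟩
  · exact Or.inl ⟨hL.2 s hsL t hts, fun h => hsσ (hmax s hsL (h ▸ hts))⟩
  · have htσ : t.erase v ⊂ σ := (subset_insert_iff.mp hts).trans_ssubset hτσ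
    by_cases hvt : v ∈ t
    · exact Or.inr ⟨t.erase v, htσ, (insert_erase hvt).symm⟩
    · rw [erase_eq_of_notMem hvt] at htσ
      exact Or.inl ⟨hL.2 σ hσL t htσ.subset, htσ.ne⟩

lemma isPureOfCard_stellarSubdivision {n : ℕ} (hL : IsSimplicialComplex L)
    (hpure : IsPureOfCard n L) (hσL : σ ∈ L) (hmax : ∀ τ ∈ L, σ ⊆ τ → τ = σ) (hv : {v} ∉ L) :
    IsPureOfCard n (stellarSubdivision L σ v) := by
  have hσcard : σ.card = n := by
    obtain ⟨ρ, hρL, hσρ, hρ⟩ := hpure σ hσL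
    rwa [hmax ρ hρL hσρ] at hρ
  have hvσ : v ∉ σ := hL.notMem_of_singleton_notMem hv hσL
  have hcone : ∀ τ ⊂ σ, ∃ ρ ∈ stellarSubdivision L σ v, insert v τ ⊆ ρ ∧ ρ.card = n := by
    intro τ hτ
    obtain ⟨a, ha, hτa⟩ := ssubset_iff_exists_subset_erase.mp hτ
    refine ⟨insert v (σ.erase a), mem_stellarSubdivision.mpr (Or.inr ⟨_, erase_ssubset ha, rfl⟩),
      insert_subset_insert v hτa, ?_⟩
    rw [card_insert_of_notMem fun h => hvσ (mem_of_mem_erase h), card_erase_of_mem ha, hσcard]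
    have := card_pos.mpr ⟨a, ha⟩
    omega
  intro s hs
  rcases mem_stellarSubdivision.mp hs with ⟨hsL, hsσ⟩ | ⟨τ, hτ, rfl⟩
  · obtain ⟨ρ, hρL, hsρ, hρ⟩ := hpure s hsL
    by_cases hρσ : ρ = σ
    · obtain ⟨ρ', hρ'L, hsρ', hρ'⟩ := hcone s ((hρσ ▸ hsρ).ssubset_of_ne hsσ)
      exact ⟨ρ', hρ'L, (subset_insert v s).trans hsρ', hρ'⟩
    · exact ⟨ρ, mem_stellarSubdivision.mpr (Or.inl ⟨hρL, hρσ⟩), hsρ, hρ⟩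
  · exact hcone τ hτ

lemma skeletonGraph_stellarSubdivision_adj_iff (hσ : 3 ≤ σ.card) {x y : α} (hx : x ≠ v)
    (hy : y ≠ v) :
    (skeletonGraph (stellarSubdivision L σ v)).Adj x y ↔ (skeletonGraph L).Adj x y := by
  refine and_congr_right' ⟨?_, fun h => mem_stellarSubdivision.mpr
    (Or.inl ⟨h, pair_ne_of_three_le_card hσ x y⟩)⟩
  intro hxy
  rcases mem_stellarSubdivision.mp hxy with ⟨hL, -⟩ | ⟨τ, -, hτ⟩
  · exact hL
  · have : v ∈ ({x, y} : Finset α) := hτ ▸ mem_insert_self v τ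
    simp [hx.symm, hy.symm] at this

lemma neighborSet_stellarSubdivision_subset (hL : IsSimplicialComplex L) (hv : {v} ∉ L) :
    (skeletonGraph (stellarSubdivision L σ v)).neighborSet v ⊆ σ := by
  rintro x ⟨hvx, hx⟩
  rcases mem_stellarSubdivision.mp hx with ⟨h, -⟩ | ⟨τ, hτ, h⟩
  · exact absurd (mem_insert_self v {x}) (hL.notMem_of_singleton_notMem hv h)
  · have : x ∈ insert v τ := h ▸ by simp
    exact hτ.subset ((mem_insert.mp this).resolve_left hvx.symm)

lemma isClique_stellarSubdivision (hL : IsSimplicialComplex L) (hσL : σ ∈ L)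
    (hσ : 3 ≤ σ.card) : (skeletonGraph (stellarSubdivision L σ v)).IsClique σ := by
  intro x hx y hy hxy
  exact ⟨hxy, mem_stellarSubdivision.mpr (Or.inl ⟨hL.2 σ hσL _
    (insert_subset hx (singleton_subset_iff.mpr hy)), pair_ne_of_three_le_card hσ x y⟩)⟩

end StellarSubdivision

structure IsChordalPureComplex (n : ℕ) (L : Set (Finset α)) : Prop where
  isSimplicialComplex : IsSimplicialComplex L
  isPureOfCard : IsPureOfCard n L
  isChordal : (skeletonGraph L).IsChordal

lemma isChordalPureComplex_simplexBoundary {n : ℕ} (hn : 3 ≤ n) {W : Finset α}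
    (hW : W.card = n + 1) : IsChordalPureComplex n (simplexBoundary W) where
  isSimplicialComplex := isSimplicialComplex_simplexBoundary (card_pos.mp (by omega))
  isPureOfCard := isPureOfCard_simplexBoundary hW
  isChordal := isChordal_of_forall_isClique_neighborSet
    (isClique_neighborSet_simplexBoundary (by omega))

lemma IsChordalPureComplex.stellarStep {n : ℕ} (hn : 3 ≤ n) {L L' : Set (Finset α)}
    (hL : IsChordalPureComplex n L) (hstep : StellarStep L L') : IsChordalPureComplex n L' := by
  obtain ⟨σ, v, hσL, hσ, hmax, hv, rfl⟩ := stellarStep_iff.mp hstep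
  have hσcard : 3 ≤ σ.card := by
    obtain ⟨ρ, hρL, hσρ, hρ⟩ := hL.isPureOfCard σ hσL
    rw [← hmax ρ hρL hσρ, hρ]
    exact hn
  refine ⟨isSimplicialComplex_stellarSubdivision hL.isSimplicialComplex hσL hσ hmax,
    isPureOfCard_stellarSubdivision hL.isSimplicialComplex hL.isPureOfCard hσL hmax hv, ?_⟩
  exact hL.isChordal.of_isClique_neighborSet
    (fun _ _ => skeletonGraph_stellarSubdivision_adj_iff hσcard)
    ((isClique_stellarSubdivision hL.isSimplicialComplex hσL hσcard).subset
      (neighborSet_stellarSubdivision_subset hL.isSimplicialComplex hv))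

end Complex

/-- every complex obtained from the boundary of an `n`-simplex
(`n ≥ 3`) by a finite sequence of stellar subdivisions of facets (i.e. the
boundary of a stacked polytope) is chordal. -/
theorem stacked_is_chordal {α : Type*} [DecidableEq α] (n : ℕ) (hn : 3 ≤ n)
    (W : Finset α) (hW : W.card = n + 1)
    (P : Set (Finset α))
    (h : Relation.ReflTransGen StellarStep
      {σ : Finset α | σ ⊆ W ∧ σ ≠ W} P) :
    ChordalComplex P := by
  have hP : IsChordalPureComplex n P := by
    induction h with
    | refl => exact isChordalPureComplex_simplexBoundary hn hW
    | tail _ hstep ih => exact ih.stellarStep hn hstep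
  exact (chordalComplex_iff_isChordal P).mpr hP.isChordal
end

section
/- Let K ≠ 2^[m] be a simplicial complex on [m] with m ≥ 4. If the 1-skeleton of Bier(K) is a chordal graph, then either K has no 2-element faces or K^∨ has no 2-element faces. -/
open Finset

/-! A square `i, j, i', j'` without chords shows that no pair lies in both `K` and `K^∨`.
Hence a pair of `K^∨` cannot be disjoint from a pair `e` of `K`, for it would lie in
`[m] \ e ∈ K`; so some edge `{x, y}` of `K` and edge `{x, z}` of `K^∨` share a vertex, and
`x`, `y`, `z` are vertices of both `K` and `K^∨`. The induced path `x, y', z, x'` then closes to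
a pentagon without chords through `y` if `{y, z} ∉ K`, and through `z'` if `{y, z} ∈ K`. -/

section Chordal

variable {α : Type*} [DecidableEq α] {L : Set (Finset α)}

theorem skeletonGraph_adj {x y : α} :
    (skeletonGraph L).Adj x y ↔ x ≠ y ∧ {x, y} ∈ L := Iff.rfl

theorem ChordalComplex.false_of_induced_square (hL : ChordalComplex L) {v₀ v₁ v₂ v₃ : α}
    (h₀₁ : (skeletonGraph L).Adj v₀ v₁) (h₁₂ : (skeletonGraph L).Adj v₁ v₂)
    (h₂₃ : (skeletonGraph L).Adj v₂ v₃) (h₃₀ : (skeletonGraph L).Adj v₃ v₀)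
    (d₀₂ : v₀ ≠ v₂) (d₁₃ : v₁ ≠ v₃)
    (n₀₂ : ¬ (skeletonGraph L).Adj v₀ v₂) (n₁₃ : ¬ (skeletonGraph L).Adj v₁ v₃) : False := by
  have := h₀₁.ne; have := h₁₂.ne; have := h₂₃.ne; have := h₃₀.ne
  -- `ZMod 4` is `Fin 4` by definition, where `fin_cases` and `decide` apply.
  refine hL 4 le_rfl ![v₀, v₁, v₂, v₃] ?_ ?_
  · change Function.Injective (![v₀, v₁, v₂, v₃] : Fin 4 → α)
    intro i j
    fin_cases i <;> fin_cases j <;> simp_all [eq_comm]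
  · change ∀ i j : Fin 4, _ ↔ (j = i + 1 ∨ i = j + 1)
    intro i j
    fin_cases i <;> fin_cases j <;> simp_all [SimpleGraph.adj_comm]

theorem ChordalComplex.false_of_induced_pentagon (hL : ChordalComplex L) {v₀ v₁ v₂ v₃ v₄ : α}
    (h₀₁ : (skeletonGraph L).Adj v₀ v₁) (h₁₂ : (skeletonGraph L).Adj v₁ v₂)
    (h₂₃ : (skeletonGraph L).Adj v₂ v₃) (h₃₄ : (skeletonGraph L).Adj v₃ v₄)
    (h₄₀ : (skeletonGraph L).Adj v₄ v₀)
    (d₀₂ : v₀ ≠ v₂) (d₀₃ : v₀ ≠ v₃) (d₁₃ : v₁ ≠ v₃) (d₁₄ : v₁ ≠ v₄) (d₂₄ : v₂ ≠ v₄)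
    (n₀₂ : ¬ (skeletonGraph L).Adj v₀ v₂) (n₀₃ : ¬ (skeletonGraph L).Adj v₀ v₃)
    (n₁₃ : ¬ (skeletonGraph L).Adj v₁ v₃) (n₁₄ : ¬ (skeletonGraph L).Adj v₁ v₄)
    (n₂₄ : ¬ (skeletonGraph L).Adj v₂ v₄) : False := by
  have := h₀₁.ne; have := h₁₂.ne; have := h₂₃.ne; have := h₃₄.ne; have := h₄₀.ne
  refine hL 5 (by norm_num) ![v₀, v₁, v₂, v₃, v₄] ?_ ?_
  · change Function.Injective (![v₀, v₁, v₂, v₃, v₄] : Fin 5 → α)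
    intro i j
    fin_cases i <;> fin_cases j <;> simp_all [eq_comm]
  · change ∀ i j : Fin 5, _ ↔ (j = i + 1 ∨ i = j + 1)
    intro i j
    fin_cases i <;> fin_cases j <;> simp_all [SimpleGraph.adj_comm]

end Chordal

section Bier

open Function (Embedding)

variable {m : ℕ} {K : Set (Finset (Fin m))}

theorem mem_dualK_of_subset (hK : IsSimplicialComplex K) {σ τ : Finset (Fin m)}
    (hσ : σ ∈ dualK K) (hτσ : τ ⊆ σ) : τ ∈ dualK K :=
  fun hτ => hσ (hK.2 _ hτ _ (sdiff_subset_sdiff subset_rfl hτσ))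

theorem empty_mem_dualK (hKne : univ ∉ K) : ∅ ∈ dualK K := by
  simpa [dualK] using hKne

theorem compl_mem_of_notMem_dualK {σ : Finset (Fin m)} (hσ : σ ∉ dualK K) : univ \ σ ∈ K :=
  not_not.mp hσ

theorem compl_mem_dualK_of_notMem {σ : Finset (Fin m)} (hσ : σ ∉ K) : univ \ σ ∈ dualK K := by
  simpa [dualK] using hσ

theorem map_inl_union_map_inr (I J : Finset (Fin m)) :
    I.map Embedding.inl ∪ J.map Embedding.inr = I.disjSum J :=
  (disjUnion_eq_union _ _ _).symm.trans (map_inl_disjUnion_map_inr I J)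

theorem disjSum_mem_bier {I J : Finset (Fin m)} :
    I.disjSum J ∈ bier K ↔ I ∈ K ∧ J ∈ dualK K ∧ Disjoint I J := by
  simp only [bier, map_inl_union_map_inr, Set.mem_ofPred_eq]
  constructor
  · rintro ⟨I', J', hI', hJ', hIJ', h⟩
    obtain ⟨rfl, rfl⟩ := disjSum_inj.mp h
    exact ⟨hI', hJ', hIJ'⟩
  · rintro ⟨hI, hJ, hIJ⟩
    exact ⟨I, J, hI, hJ, hIJ, rfl⟩

theorem bier_adj_inl_inl (hKne : univ ∉ K) {x y : Fin m} :
    (skeletonGraph (bier K)).Adj (.inl x) (.inl y) ↔ x ≠ y ∧ {x, y} ∈ K := by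
  have : ({.inl x, .inl y} : Finset (Fin m ⊕ Fin m)) = ({x, y} : Finset (Fin m)).disjSum ∅ := by
    ext (_ | _) <;> simp
  rw [skeletonGraph_adj, this, disjSum_mem_bier]
  simp [empty_mem_dualK hKne]

theorem bier_adj_inr_inr (hK : IsSimplicialComplex K) {x y : Fin m} :
    (skeletonGraph (bier K)).Adj (.inr x) (.inr y) ↔ x ≠ y ∧ {x, y} ∈ dualK K := by
  have : ({.inr x, .inr y} : Finset (Fin m ⊕ Fin m)) = (∅ : Finset (Fin m)).disjSum {x, y} := by
    ext (_ | _) <;> simp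
  rw [skeletonGraph_adj, this, disjSum_mem_bier]
  simp [hK.1]

theorem bier_adj_inl_inr {x y : Fin m} :
    (skeletonGraph (bier K)).Adj (.inl x) (.inr y) ↔ x ≠ y ∧ {x} ∈ K ∧ {y} ∈ dualK K := by
  have : ({.inl x, .inr y} : Finset (Fin m ⊕ Fin m)) = ({x} : Finset (Fin m)).disjSum {y} := by
    ext (_ | _) <;> simp
  rw [skeletonGraph_adj, this, disjSum_mem_bier]
  simp [and_comm, and_left_comm]

theorem ChordalComplex.pair_notMem_dualK (hch : ChordalComplex (bier K))
    (hK : IsSimplicialComplex K) (hKne : univ ∉ K) {x y : Fin m} (hxy : x ≠ y)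
    (hxyK : {x, y} ∈ K) : {x, y} ∉ dualK K := by
  intro hxyD
  have hx : {x} ∈ K := hK.2 _ hxyK _ (by simp)
  have hy : {y} ∈ K := hK.2 _ hxyK _ (by simp)
  have hdx : {x} ∈ dualK K := mem_dualK_of_subset hK hxyD (by simp)
  have hdy : {y} ∈ dualK K := mem_dualK_of_subset hK hxyD (by simp)
  exact hch.false_of_induced_square (v₀ := .inl x) (v₁ := .inl y) (v₂ := .inr x) (v₃ := .inr y)
    ((bier_adj_inl_inl hKne).2 ⟨hxy, hxyK⟩) (bier_adj_inl_inr.2 ⟨hxy.symm, hy, hdx⟩)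
    ((bier_adj_inr_inr hK).2 ⟨hxy, hxyD⟩) (bier_adj_inl_inr.2 ⟨hxy, hx, hdy⟩).symm
    Sum.inl_ne_inr Sum.inl_ne_inr
    (fun h => (bier_adj_inl_inr.1 h).1 rfl) (fun h => (bier_adj_inl_inr.1 h).1 rfl)

theorem exists_pairs_sharing_vertex (hK : IsSimplicialComplex K)
    (H : ∀ {p q : Fin m}, p ≠ q → {p, q} ∈ K → {p, q} ∉ dualK K)
    {i j a b : Fin m} (hij : i ≠ j) (hab : a ≠ b) (hijK : {i, j} ∈ K) (habD : {a, b} ∈ dualK K) :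
    ∃ x y z : Fin m, x ≠ y ∧ x ≠ z ∧ y ≠ z ∧ {x, y} ∈ K ∧ {x, z} ∈ dualK K := by
  have hmeet : (a = i ∨ a = j) ∨ (b = i ∨ b = j) := by
    by_contra! hdisj
    refine H hab (hK.2 _ (compl_mem_of_notMem_dualK (H hij hijK)) _ ?_) habD
    simp [insert_subset_iff, hdisj.1.1, hdisj.1.2, hdisj.2.1, hdisj.2.2]
  have of_shared : ∀ {x y z : Fin m}, x ≠ y → x ≠ z → {x, y} ∈ K → {x, z} ∈ dualK K →
      ∃ x y z : Fin m, x ≠ y ∧ x ≠ z ∧ y ≠ z ∧ {x, y} ∈ K ∧ {x, z} ∈ dualK K :=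
    fun hxy hxz hxyK hxzD => ⟨_, _, _, hxy, hxz, by rintro rfl; exact H hxy hxyK hxzD, hxyK, hxzD⟩
  rcases hmeet with (rfl | rfl) | (rfl | rfl)
  · exact of_shared hij hab hijK habD
  · exact of_shared hij.symm hab (by rwa [pair_comm] at hijK) habD
  · exact of_shared hij hab.symm hijK (by rwa [pair_comm] at habD)
  · exact of_shared hij.symm hab.symm (by rwa [pair_comm] at hijK) (by rwa [pair_comm] at habD)

theorem not_chordal_bier_of_pairs_sharing_vertex (hK : IsSimplicialComplex K) (hKne : univ ∉ K)
    {x y z : Fin m} (hxy : x ≠ y) (hxz : x ≠ z) (hyz : y ≠ z)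
    (hxyK : {x, y} ∈ K) (hxzD : {x, z} ∈ dualK K) : ¬ ChordalComplex (bier K) := by
  intro hch
  have H : ∀ {p q : Fin m}, p ≠ q → {p, q} ∈ K → {p, q} ∉ dualK K :=
    hch.pair_notMem_dualK hK hKne
  have hx : {x} ∈ K := hK.2 _ hxyK _ (by simp)
  have hy : {y} ∈ K := hK.2 _ hxyK _ (by simp)
  have hz : {z} ∈ K :=
    hK.2 _ (compl_mem_of_notMem_dualK (H hxy hxyK)) _ (by simp [hxz.symm, hyz.symm])
  have hdx : {x} ∈ dualK K := mem_dualK_of_subset hK hxzD (by simp)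
  have hdz : {z} ∈ dualK K := mem_dualK_of_subset hK hxzD (by simp)
  have hdy : {y} ∈ dualK K :=
    mem_dualK_of_subset hK (compl_mem_dualK_of_notMem fun h => H hxz h hxzD)
      (by simp [hxy.symm, hyz])
  obtain ⟨w, hwx', hwx, hwy', hwz, hwy'_nadj, hwz_nadj⟩ : ∃ w,
      (skeletonGraph (bier K)).Adj (.inr x) w ∧ (skeletonGraph (bier K)).Adj w (.inl x) ∧
      .inr y ≠ w ∧ .inl z ≠ w ∧
      ¬ (skeletonGraph (bier K)).Adj (.inr y) w ∧ ¬ (skeletonGraph (bier K)).Adj (.inl z) w := by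
    by_cases hyzK : {y, z} ∈ K
    · exact ⟨.inr z, (bier_adj_inr_inr hK).2 ⟨hxz, hxzD⟩, (bier_adj_inl_inr.2 ⟨hxz, hx, hdz⟩).symm,
        by simp [hyz], Sum.inl_ne_inr, fun h => H hyz hyzK ((bier_adj_inr_inr hK).1 h).2,
        fun h => (bier_adj_inl_inr.1 h).1 rfl⟩
    · exact ⟨.inl y, (bier_adj_inl_inr.2 ⟨hxy.symm, hy, hdx⟩).symm,
        ((bier_adj_inl_inl hKne).2 ⟨hxy, hxyK⟩).symm, Sum.inr_ne_inl, by simp [hyz.symm],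
        fun h => (bier_adj_inl_inr.1 h.symm).1 rfl,
        fun h => hyzK (pair_comm z y ▸ ((bier_adj_inl_inl hKne).1 h).2)⟩
  exact hch.false_of_induced_pentagon (v₀ := .inl x) (v₁ := .inr y) (v₂ := .inl z) (v₃ := .inr x)
    (bier_adj_inl_inr.2 ⟨hxy, hx, hdy⟩) (bier_adj_inl_inr.2 ⟨hyz.symm, hz, hdy⟩).symm
    (bier_adj_inl_inr.2 ⟨hxz.symm, hz, hdx⟩) hwx' hwx
    (by simp [hxz]) Sum.inl_ne_inr (by simp [hxy.symm]) hwy' hwz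
    (fun h => H hxz ((bier_adj_inl_inl hKne).1 h).2 hxzD) (fun h => (bier_adj_inl_inr.1 h).1 rfl)
    (fun h => H hxy hxyK (pair_comm y x ▸ ((bier_adj_inr_inr hK).1 h).2)) hwy'_nadj hwz_nadj

end Bier

theorem chordal_bier_no_edges_general {m : ℕ} (K : Set (Finset (Fin m)))
    (hK : IsSimplicialComplex K) (hKne : Finset.univ ∉ K)
    (hch : ChordalComplex (bier K)) :
    (∀ i j : Fin m, i ≠ j → ({i, j} : Finset (Fin m)) ∉ K) ∨
    (∀ i j : Fin m, i ≠ j → ({i, j} : Finset (Fin m)) ∉ dualK K) := by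
  by_contra! ⟨⟨i, j, hij, hijK⟩, a, b, hab, habD⟩
  obtain ⟨x, y, z, hxy, hxz, hyz, hxyK, hxzD⟩ :=
    exists_pairs_sharing_vertex hK (hch.pair_notMem_dualK hK hKne) hij hab hijK habD
  exact not_chordal_bier_of_pairs_sharing_vertex hK hKne hxy hxz hyz hxyK hxzD hch

/-- for `m ≥ 4`, if the 1-skeleton of `Bier(K)` is chordal,
then `K` has no edges or `K^∨` has no edges. -/
theorem chordal_bier_no_edges {m : ℕ} (hm : 4 ≤ m) (K : Set (Finset (Fin m)))
    (hK : IsSimplicialComplex K) (hKne : Finset.univ ∉ K)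
    (hch : ChordalComplex (bier K)) :
    (∀ i j : Fin m, i ≠ j → ({i, j} : Finset (Fin m)) ∉ K) ∨
    (∀ i j : Fin m, i ≠ j → ({i, j} : Finset (Fin m)) ∉ dualK K) :=
  chordal_bier_no_edges_general K hK hKne hch
end

section
/- Let K ≠ 2^[m] be a simplicial complex on [m] with m ≥ 4 such that K^∨ has no edges and its vertex set is {1',…,k'} for some 0 ≤ k ≤ m. Then Bier(K) is simplicially isomorphic to the complex obtained from the boundary ∂Δ_[m] of the (m−1)-simplex by stellar subdivisions of the facets [m]\{i} with apex i', for 1 ≤ i ≤ k. In particular, Bier(K) is chordal and polytopal. -/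
open Finset

/-!
A complex on `[m]` is determined by its Alexander dual, `σ ∈ K ↔ [m] \ σ ∉ K^∨`. For
`K^∨ = {∅, {1'}, …, {k'}}` the faces `I ⊔ J'` of `Bier(K)` are therefore the proper subsets
`I ≠ [m] \ {i}` (`i ≤ k`) of `[m]` together with `I ⊔ {i'}` for `I ⊊ [m] \ {i}`, which is the
stellar subdivision. Since `m ≥ 4`, every pair of unprimed vertices is a face, while no two primed
vertices are, so the 1-skeleton is a split graph: in a cycle of length at least `4` two unprimed
vertices at distance two always exist and span a chord.
-/

theorem ZMod.natCast_ne_zero_of_pos_of_lt_s18 {n d : ℕ} (hd : 0 < d) (hdn : d < n) :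
    (d : ZMod n) ≠ 0 := by
  rw [Ne, ZMod.natCast_eq_zero_iff]
  exact Nat.not_dvd_of_pos_of_lt hd hdn

theorem ZMod.ne_add_two_and_not_consecutive {n : ℕ} (hn : 4 ≤ n) (i : ZMod n) :
    i ≠ i + 2 ∧ ¬ (i + 2 = i + 1 ∨ i = i + 2 + 1) := by
  have h1 : ((1 : ℕ) : ZMod n) ≠ 0 := ZMod.natCast_ne_zero_of_pos_of_lt_s18 one_pos (by omega)
  have h2 : ((2 : ℕ) : ZMod n) ≠ 0 := ZMod.natCast_ne_zero_of_pos_of_lt_s18 two_pos (by omega)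
  have h3 : ((3 : ℕ) : ZMod n) ≠ 0 := ZMod.natCast_ne_zero_of_pos_of_lt_s18 three_pos (by omega)
  push_cast at h1 h2 h3
  refine ⟨fun h => h2 ?_, ?_⟩
  · linear_combination -h
  · rintro (h | h)
    · exact h1 (by linear_combination h)
    · exact h3 (by linear_combination -h)

theorem ChordalComplex.of_isSplit {α : Type*} [DecidableEq α] {L : Set (Finset α)} (C : Set α)
    (hC : ∀ a ∈ C, ∀ b ∈ C, a ≠ b → ({a, b} : Finset α) ∈ L)
    (hI : ∀ a ∉ C, ∀ b ∉ C, a ≠ b → ({a, b} : Finset α) ∉ L) :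
    ChordalComplex L := by
  intro n hn f hf hcycle
  have edge_meets : ∀ i, f i ∈ C ∨ f (i + 1) ∈ C := by
    intro i
    by_contra! h
    obtain ⟨hne, hedge⟩ := (hcycle i (i + 1)).2 (Or.inl rfl)
    exact hI _ h.1 _ h.2 hne hedge
  have no_chord : ∀ i, f i ∈ C → f (i + 2) ∉ C := by
    intro i hi hi2
    obtain ⟨hne, hnadj⟩ := ZMod.ne_add_two_and_not_consecutive hn i
    exact hnadj <| (hcycle i (i + 2)).1 ⟨hf.ne hne, hC _ hi _ hi2 (hf.ne hne)⟩
  obtain ⟨c, hc⟩ : ∃ c, f c ∈ C := (edge_meets 0).elim (⟨0, ·⟩) (⟨0 + 1, ·⟩)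
  have hc1 : f (c + 1) ∈ C := by
    refine (edge_meets (c + 1)).resolve_right ?_
    rw [show c + 1 + 1 = c + 2 by ring]
    exact no_chord c hc
  have hc3 : f (c + 1 + 2) ∈ C := by
    rw [show c + 1 + 2 = c + 2 + 1 by ring]
    exact (edge_meets (c + 2)).resolve_left (no_chord c hc)
  exact no_chord (c + 1) hc1 hc3

section Bier

variable {m : ℕ} {K : Set (Finset (Fin m))}

theorem mem_iff_compl_notMem_dualK (σ : Finset (Fin m)) : σ ∈ K ↔ univ \ σ ∉ dualK K := by
  simp [dualK, Finset.sdiff_sdiff_eq_self (subset_univ σ)]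

theorem map_inl_mem_bier (huniv : univ ∉ K) {σ : Finset (Fin m)} (hσ : σ ∈ K) :
    σ.map Function.Embedding.inl ∈ bier K :=
  ⟨σ, ∅, hσ, by simpa [dualK] using huniv, disjoint_empty_right σ, by simp⟩

theorem inr_pair_notMem_bier (hdual : ∀ J ∈ dualK K, #J ≤ 1) {p q : Fin m} (hpq : p ≠ q) :
    ({Sum.inr p, Sum.inr q} : Finset (Fin m ⊕ Fin m)) ∉ bier K := by
  rintro ⟨I, J, -, hJ, -, hS⟩
  have hp : p ∈ J := by simpa using hS.subset (mem_insert_self _ _)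
  have hq : q ∈ J := by simpa using hS.subset (mem_insert_of_mem (mem_singleton_self _))
  exact hpq (card_le_one.mp (hdual J hJ) p hp q hq)

theorem chordalComplex_bier (huniv : univ ∉ K) (hedges : ∀ σ : Finset (Fin m), #σ ≤ 2 → σ ∈ K)
    (hdual : ∀ J ∈ dualK K, #J ≤ 1) : ChordalComplex (bier K) := by
  refine ChordalComplex.of_isSplit (Set.range Sum.inl) ?_ ?_
  · rintro _ ⟨a, rfl⟩ _ ⟨b, rfl⟩ -
    simpa using map_inl_mem_bier huniv (hedges {a, b} card_le_two)
  · rintro (a | p) hx (b | q) hy hpq <;> simp only [Set.mem_range, exists_apply_eq_apply,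
      not_true_eq_false, reduceCtorEq, exists_false, not_false_eq_true] at hx hy
    exact inr_pair_notMem_bier hdual (Sum.inr_injective.ne_iff.mp hpq)

end Bier

/-- `∂Δ_[m]` on the `inl` vertices, with each facet `[m] \ {i}`, `i < k`, stellarly subdivided
with apex `inr i`. -/
def stellarBoundary (m k : ℕ) : Set (Finset (Fin m ⊕ Fin m)) :=
  {S | (∃ σ : Finset (Fin m), σ ≠ univ ∧ (∀ i : Fin m, (i : ℕ) < k → σ ≠ univ.erase i) ∧
        S = σ.map Function.Embedding.inl) ∨
      (∃ i : Fin m, (i : ℕ) < k ∧ ∃ τ : Finset (Fin m),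
        τ ⊆ univ.erase i ∧ τ ≠ univ.erase i ∧
        S = insert (Sum.inr i) (τ.map Function.Embedding.inl))}

section Stacked

variable {m k : ℕ} {K : Set (Finset (Fin m))}
  (hdual : dualK K = {J | J = ∅ ∨ ∃ i : Fin m, (i : ℕ) < k ∧ J = {i}})
include hdual

theorem mem_iff_of_dualK_eq (σ : Finset (Fin m)) :
    σ ∈ K ↔ σ ≠ univ ∧ ∀ i : Fin m, (i : ℕ) < k → σ ≠ univ.erase i := by
  simp [mem_iff_compl_notMem_dualK, hdual, ← compl_eq_univ_sdiff, compl_eq_comm (x := σ),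
    compl_singleton, eq_comm]

theorem mem_of_card_add_one_lt {σ : Finset (Fin m)} (hσ : #σ + 1 < m) : σ ∈ K := by
  refine (mem_iff_of_dualK_eq hdual σ).mpr ⟨?_, fun i _ => ?_⟩ <;> rintro rfl
  · simp at hσ
  · simp only [mem_univ, card_erase_of_mem, card_univ, Fintype.card_fin] at hσ
    omega

theorem card_le_one_of_mem_dualK : ∀ J ∈ dualK K, #J ≤ 1 := by
  rw [hdual]
  rintro J (rfl | ⟨i, -, rfl⟩) <;> simp

theorem bier_eq_stellarBoundary : bier K = stellarBoundary m k := by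
  ext S
  simp only [bier, stellarBoundary, Set.mem_ofPred_eq, mem_iff_of_dualK_eq hdual]
  constructor
  · rintro ⟨I, J, hI, hJ, hIJ, rfl⟩
    rcases hdual ▸ hJ with rfl | ⟨i, hi, rfl⟩
    · exact Or.inl ⟨I, hI.1, hI.2, by simp⟩
    · refine Or.inr ⟨i, hi, I, ?_, hI.2 i hi, ?_⟩
      · rwa [← compl_singleton, subset_compl_iff_disjoint_right]
      · ext x
        simp
  · rintro (⟨σ, hσ, hσ', rfl⟩ | ⟨i, hi, τ, hτi, hτi', rfl⟩)
    · exact ⟨σ, ∅, ⟨hσ, hσ'⟩, by simp [hdual], disjoint_empty_right σ, by simp⟩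
    · have hτ : #τ + 1 < m := by
        have := card_lt_card (ssubset_of_subset_of_ne hτi hτi')
        simp only [mem_univ, card_erase_of_mem, card_univ, Fintype.card_fin] at this
        omega
      refine ⟨τ, {i}, (mem_iff_of_dualK_eq hdual τ).mp (mem_of_card_add_one_lt hdual hτ),
        by simp [hdual, hi], ?_, ?_⟩
      · rwa [← subset_compl_iff_disjoint_right, compl_singleton]
      · ext x
        simp

end Stacked

theorem bier_stacked_general {m k : ℕ} (hm : 4 ≤ m)
    (K : Set (Finset (Fin m)))
    (hdual : dualK K = {J : Finset (Fin m) |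
      J = ∅ ∨ ∃ i : Fin m, (i : ℕ) < k ∧ J = {i}}) :
    bier K = {S : Finset (Fin m ⊕ Fin m) |
      (∃ σ : Finset (Fin m), σ ≠ Finset.univ ∧
        (∀ i : Fin m, (i : ℕ) < k → σ ≠ Finset.univ.erase i) ∧
        S = σ.map Function.Embedding.inl) ∨
      (∃ i : Fin m, (i : ℕ) < k ∧ ∃ τ : Finset (Fin m),
        τ ⊆ Finset.univ.erase i ∧ τ ≠ Finset.univ.erase i ∧
        S = insert (Sum.inr i) (τ.map Function.Embedding.inl))} ∧
    ChordalComplex (bier K) := by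
  have huniv : univ ∉ K := fun h => ((mem_iff_of_dualK_eq hdual univ).mp h).1 rfl
  have hedges : ∀ σ : Finset (Fin m), #σ ≤ 2 → σ ∈ K :=
    fun σ hσ => mem_of_card_add_one_lt hdual (by omega)
  exact ⟨bier_eq_stellarBoundary hdual,
    chordalComplex_bier huniv hedges (card_le_one_of_mem_dualK hdual)⟩

/-- if `K^∨ = {∅, {1'}, …, {k'}}` (no edges, vertex set the first
`k` primed elements), then `Bier(K)` is the complex obtained from `∂Δ_[m]`
(embedded via `inl`) by stellar subdivisions of the facets `[m] \ {i}` with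
apex `i'` for `1 ≤ i ≤ k`; in particular `Bier(K)` is chordal. -/
theorem bier_stacked {m k : ℕ} (hm : 4 ≤ m) (hk : k ≤ m)
    (K : Set (Finset (Fin m))) (hK : IsSimplicialComplex K)
    (hKne : Finset.univ ∉ K)
    (hdual : dualK K = {J : Finset (Fin m) |
      J = ∅ ∨ ∃ i : Fin m, (i : ℕ) < k ∧ J = {i}}) :
    bier K = {S : Finset (Fin m ⊕ Fin m) |
      (∃ σ : Finset (Fin m), σ ≠ Finset.univ ∧
        (∀ i : Fin m, (i : ℕ) < k → σ ≠ Finset.univ.erase i) ∧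
        S = σ.map Function.Embedding.inl) ∨
      (∃ i : Fin m, (i : ℕ) < k ∧ ∃ τ : Finset (Fin m),
        τ ⊆ Finset.univ.erase i ∧ τ ≠ Finset.univ.erase i ∧
        S = insert (Sum.inr i) (τ.map Function.Embedding.inl))} ∧
    ChordalComplex (bier K) :=
  bier_stacked_general hm K hdual
end

section
/- Let K ≠ 2^[m] be a simplicial complex on [m] with m ≥ 4, and suppose the 1-skeleton of Bier(K) is chordal and {1,2} ∈ K. Then K has no ghost vertices and the 1-skeleton of K is the complete graph on [m]. -/
open Finset

/-
The vertices `i` and `i'` of `Bier(K)` span copies of the 1-skeleta of `K` and of `K^∨` as induced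
subgraphs, so these are chordal as well. If a pair `{a, b}` were an edge of both `K` and `K^∨`, then
`a b a' b'` would be an induced 4-cycle of `Bier(K)`; so `[m] \ {a, b} ∈ K` for every edge `{a, b}`
of `K`, i.e. a pair disjoint from an edge of `K` is again an edge of `K`. Now let `c, d, e, f` be
distinct with `{c, e}, {d, f} ∈ K` but `{c, d}, {e, f} ∉ K`. By the transfer to disjoint pairs,
`{c, f}` and `{d, e}` are both edges of `K`, giving the induced square `c e d f` in `K`, or both
non-edges, giving the induced square `c d e f` in `K^∨`. Hence, using a fourth vertex (`m ≥ 4`),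
an edge `{c, e}` of `K` yields the edge `{c, d}` for every `d ≠ c`, and two such moves starting from
`{a, b}` reach every pair.
-/

namespace Finset

variable {α β : Type*}

@[simp] theorem toLeft_singleton_inl (a : α) : ({.inl a} : Finset (α ⊕ β)).toLeft = {a} := by
  ext; simp

@[simp] theorem toRight_singleton_inl (a : α) : ({.inl a} : Finset (α ⊕ β)).toRight = ∅ := by
  ext; simp

@[simp] theorem toLeft_singleton_inr (b : β) : ({.inr b} : Finset (α ⊕ β)).toLeft = ∅ := by
  ext; simp

@[simp] theorem toRight_singleton_inr (b : β) : ({.inr b} : Finset (α ⊕ β)).toRight = {b} := by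
  ext; simp

end Finset

variable {m : ℕ} {K : Set (Finset (Fin m))}

theorem mem_bier_iff {S : Finset (Fin m ⊕ Fin m)} :
    S ∈ bier K ↔ S.toLeft ∈ K ∧ S.toRight ∈ dualK K ∧ Disjoint S.toLeft S.toRight := by
  have hunion (I J : Finset (Fin m)) :
      I.map Function.Embedding.inl ∪ J.map Function.Embedding.inr = I.disjSum J := by
    rw [← map_inl_disjUnion_map_inr, disjUnion_eq_union]
  constructor
  · rintro ⟨I, J, hI, hJ, hIJ, rfl⟩
    simpa [hunion] using ⟨hI, hJ, hIJ⟩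
  · rintro ⟨hl, hr, hd⟩
    exact ⟨_, _, hl, hr, hd, by rw [hunion, toLeft_disjSum_toRight]⟩

theorem skeletonGraph_bier_adj_inl_inl (hKne : Finset.univ ∉ K) {i j : Fin m} :
    (skeletonGraph (bier K)).Adj (.inl i) (.inl j) ↔ (skeletonGraph K).Adj i j := by
  simp [skeletonGraph, mem_bier_iff, dualK, hKne]

theorem skeletonGraph_bier_adj_inr_inr (hK : IsSimplicialComplex K) {i j : Fin m} :
    (skeletonGraph (bier K)).Adj (.inr i) (.inr j) ↔ (skeletonGraph (dualK K)).Adj i j := by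
  simp [skeletonGraph, mem_bier_iff, hK.1]

theorem skeletonGraph_bier_adj_inl_inr {i j : Fin m} :
    (skeletonGraph (bier K)).Adj (.inl i) (.inr j) ↔ {i} ∈ K ∧ {j} ∈ dualK K ∧ i ≠ j := by
  simp [skeletonGraph, mem_bier_iff]

theorem skeletonGraph_bier_not_adj_inl_inr_self (i : Fin m) :
    ¬ (skeletonGraph (bier K)).Adj (.inl i) (.inr i) := by
  simp [skeletonGraph, mem_bier_iff]

namespace ChordalComplex

variable {α β : Type*} [DecidableEq α] [DecidableEq β] {L : Set (Finset α)}

theorem of_adj_iff {L' : Set (Finset β)} (h : ChordalComplex L') {g : α → β}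
    (hg : Function.Injective g)
    (hadj : ∀ i j, (skeletonGraph L').Adj (g i) (g j) ↔ (skeletonGraph L).Adj i j) :
    ChordalComplex L := fun n hn f hf hcycle =>
  h n hn (g ∘ f) (hg.comp hf) fun i j => (hadj (f i) (f j)).trans (hcycle i j)

theorem not_induced_square (h : ChordalComplex L) {v₀ v₁ v₂ v₃ : α}
    (h₀₂ : v₀ ≠ v₂) (h₁₃ : v₁ ≠ v₃)
    (e₀₁ : (skeletonGraph L).Adj v₀ v₁) (e₁₂ : (skeletonGraph L).Adj v₁ v₂)
    (e₂₃ : (skeletonGraph L).Adj v₂ v₃) (e₃₀ : (skeletonGraph L).Adj v₃ v₀)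
    (n₀₂ : ¬ (skeletonGraph L).Adj v₀ v₂) (n₁₃ : ¬ (skeletonGraph L).Adj v₁ v₃) : False := by
  have := e₀₁.ne; have := e₁₂.ne; have := e₂₃.ne; have := e₃₀.ne
  have hcases : ∀ k : ZMod 4, k = 0 ∨ k = 1 ∨ k = 2 ∨ k = 3 := by decide
  let f : ZMod 4 → α := ![v₀, v₁, v₂, v₃]
  have hf : f 0 = v₀ ∧ f 1 = v₁ ∧ f 2 = v₂ ∧ f 3 = v₃ := ⟨rfl, rfl, rfl, rfl⟩
  refine h 4 le_rfl f (fun i j hij => ?_) (fun i j => ?_)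
  · rcases hcases i with rfl | rfl | rfl | rfl <;> rcases hcases j with rfl | rfl | rfl | rfl <;>
      simp_all [eq_comm]
  · rcases hcases i with rfl | rfl | rfl | rfl <;> rcases hcases j with rfl | rfl | rfl | rfl <;>
      simp_all [SimpleGraph.adj_comm] <;> decide

end ChordalComplex

theorem ChordalComplex.of_bier (hKne : Finset.univ ∉ K) (h : ChordalComplex (bier K)) :
    ChordalComplex K :=
  h.of_adj_iff Sum.inl_injective fun _ _ => skeletonGraph_bier_adj_inl_inl hKne

theorem ChordalComplex.dualK_of_bier (hK : IsSimplicialComplex K) (h : ChordalComplex (bier K)) :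
    ChordalComplex (dualK K) :=
  h.of_adj_iff Sum.inr_injective fun _ _ => skeletonGraph_bier_adj_inr_inr hK

namespace IsSimplicialComplex

variable {I J J' : Finset (Fin m)}

theorem mem_dualK_of_subset (hK : IsSimplicialComplex K) (hJ : J ∈ dualK K) (hJ' : J' ⊆ J) :
    J' ∈ dualK K :=
  fun h => hJ (hK.2 _ h _ (sdiff_subset_sdiff subset_rfl hJ'))

theorem mem_dualK_of_disjoint (hK : IsSimplicialComplex K) (hI : I ∉ K) (hIJ : Disjoint I J) :
    J ∈ dualK K :=
  fun h => hI (hK.2 _ h _ (subset_sdiff.mpr ⟨subset_univ I, hIJ⟩))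

end IsSimplicialComplex

section ChordalBier

variable {a b c d e f : Fin m}

theorem notMem_dualK_of_pair_mem (hK : IsSimplicialComplex K) (hKne : Finset.univ ∉ K)
    (hch : ChordalComplex (bier K)) (hab : a ≠ b) (he : {a, b} ∈ K) : {a, b} ∉ dualK K := by
  intro hd
  have hKa : {a} ∈ K := hK.2 _ he _ (by simp)
  have hKb : {b} ∈ K := hK.2 _ he _ (by simp)
  have hda : {a} ∈ dualK K := hK.mem_dualK_of_subset hd (by simp)
  have hdb : {b} ∈ dualK K := hK.mem_dualK_of_subset hd (by simp)
  exact hch.not_induced_square (v₀ := .inl a) (v₁ := .inl b) (v₂ := .inr a) (v₃ := .inr b)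
    Sum.inl_ne_inr Sum.inl_ne_inr
    ((skeletonGraph_bier_adj_inl_inl hKne).2 ⟨hab, he⟩)
    (skeletonGraph_bier_adj_inl_inr.2 ⟨hKb, hda, hab.symm⟩)
    ((skeletonGraph_bier_adj_inr_inr hK).2 ⟨hab, hd⟩)
    (skeletonGraph_bier_adj_inl_inr.2 ⟨hKa, hdb, hab⟩).symm
    (skeletonGraph_bier_not_adj_inl_inr_self a) (skeletonGraph_bier_not_adj_inl_inr_self b)

theorem pair_mem_of_disjoint_pair_mem (hK : IsSimplicialComplex K) (hKne : Finset.univ ∉ K)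
    (hch : ChordalComplex (bier K)) (hab : a ≠ b) (he : {a, b} ∈ K)
    (hdisj : Disjoint ({c, d} : Finset (Fin m)) {a, b}) : {c, d} ∈ K := by
  by_contra h
  exact notMem_dualK_of_pair_mem hK hKne hch hab he (hK.mem_dualK_of_disjoint h hdisj)

theorem pair_mem_or_pair_mem_of_crossing (hK : IsSimplicialComplex K) (hKne : Finset.univ ∉ K)
    (hch : ChordalComplex (bier K)) (hcd : c ≠ d) (hce : c ≠ e) (hcf : c ≠ f) (hde : d ≠ e)
    (hdf : d ≠ f) (hef : e ≠ f) (hKce : {c, e} ∈ K) (hKdf : {d, f} ∈ K) :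
    {c, d} ∈ K ∨ {e, f} ∈ K := by
  by_contra! ⟨hKcd, hKef⟩
  by_cases hKcf : {c, f} ∈ K
  · have hKde : {d, e} ∈ K :=
      pair_mem_of_disjoint_pair_mem hK hKne hch hcf hKcf (by simp; grind)
    exact (ChordalComplex.of_bier hKne hch).not_induced_square hcd hef
      ⟨hce, hKce⟩ ⟨hde.symm, by rwa [pair_comm]⟩ ⟨hdf, hKdf⟩ ⟨hcf.symm, by rwa [pair_comm]⟩
      (fun h => hKcd h.2) (fun h => hKef h.2)
  · have hKde : {d, e} ∉ K := fun h =>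
      hKcf (pair_mem_of_disjoint_pair_mem hK hKne hch hde h (by simp; grind))
    exact (ChordalComplex.dualK_of_bier hK hch).not_induced_square hce hdf
      ⟨hcd, hK.mem_dualK_of_disjoint hKef (by simp; grind)⟩
      ⟨hde, hK.mem_dualK_of_disjoint hKcf (by simp; grind)⟩
      ⟨hef, hK.mem_dualK_of_disjoint hKcd (by simp; grind)⟩
      ⟨hcf.symm, hK.mem_dualK_of_disjoint hKde (by simp; grind)⟩
      (fun h => notMem_dualK_of_pair_mem hK hKne hch hce hKce h.2)
      (fun h => notMem_dualK_of_pair_mem hK hKne hch hdf hKdf h.2)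

theorem pair_mem_of_pair_mem_of_ne (hm : 4 ≤ m) (hK : IsSimplicialComplex K)
    (hKne : Finset.univ ∉ K) (hch : ChordalComplex (bier K)) (hce : c ≠ e) (hKce : {c, e} ∈ K)
    (hdc : d ≠ c) : {c, d} ∈ K := by
  by_cases hde : d = e
  · rwa [hde]
  obtain ⟨f, -, hf⟩ : ∃ f ∈ (univ : Finset (Fin m)), f ∉ ({c, d, e} : Finset (Fin m)) := by
    refine exists_mem_notMem_of_card_lt_card (card_le_three.trans_lt ?_)
    rw [card_univ, Fintype.card_fin]
    omega
  simp only [mem_insert, mem_singleton, not_or] at hf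
  obtain ⟨hfc, hfd, hfe⟩ := hf
  have hKdf : {d, f} ∈ K :=
    pair_mem_of_disjoint_pair_mem hK hKne hch hce hKce (by simp; grind)
  rcases pair_mem_or_pair_mem_of_crossing hK hKne hch hdc.symm hce (Ne.symm hfc) hde
    (Ne.symm hfd) (Ne.symm hfe) hKce hKdf with hKcd | hKef
  · exact hKcd
  · exact pair_mem_of_disjoint_pair_mem hK hKne hch (Ne.symm hfe) hKef (by simp; grind)

end ChordalBier

/-- for `m ≥ 4`, if `Bier(K)` is chordal and `K` contains an
edge, then `K` has no ghost vertices and its 1-skeleton is the complete graph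
on `[m]`. -/
theorem chordal_bier_with_edge {m : ℕ} (hm : 4 ≤ m) (K : Set (Finset (Fin m)))
    (hK : IsSimplicialComplex K) (hKne : Finset.univ ∉ K)
    (hch : ChordalComplex (bier K))
    (a b : Fin m) (hab : a ≠ b) (he : ({a, b} : Finset (Fin m)) ∈ K) :
    (∀ i : Fin m, ({i} : Finset (Fin m)) ∈ K) ∧
    (∀ i j : Fin m, i ≠ j → ({i, j} : Finset (Fin m)) ∈ K) := by
  have hpair (i j : Fin m) (hij : i ≠ j) : {i, j} ∈ K := by
    by_cases hia : i = a
    · subst hia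
      exact pair_mem_of_pair_mem_of_ne hm hK hKne hch hab he hij.symm
    · have hKia : {i, a} ∈ K := by
        rw [pair_comm]; exact pair_mem_of_pair_mem_of_ne hm hK hKne hch hab he hia
      exact pair_mem_of_pair_mem_of_ne hm hK hKne hch hia hKia hij.symm
  refine ⟨fun i => ?_, hpair⟩
  by_cases hia : i = a
  · exact hK.2 _ he _ (by simp [hia])
  · exact hK.2 _ (hpair a i (Ne.symm hia)) _ (by simp)
end
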